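/- arXiv:1706.04321 — 6 statements merged into one kernel-verified Lean document; each statement's English description precedes it below -/
import Mathlib

section
/- Let c > 1 and 1 ≤ p < c/(c−1), and let g : (0,1] → ℝ≥0 be non-increasing, integrable, and satisfy (1/t)·∫₀ᵗ g(y) dy ≤ c·g(t) for all t ∈ (0,1]. Then ∫₀¹ g(y)^p dy ≤ (1 / (c^(p-1)·(c + p − p·c)))·(∫₀¹ g(y) dy)^p. -/
open MeasureTheory Set

lemma rh_core (c p : ℝ) (hc : 1 < c) (hp1 : 1 ≤ p) (u B : ℝ)
    (hu : 0 ≤ u) (h1 : u ≤ B) (h2 : B ≤ c * u) :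
    c ^ (p - 1) * (c + p - p * c) * u ^ p ≤ p * u * B ^ (p - 1) + (1 - p) * B ^ p := by
  have hp0 : (0:ℝ) < p := lt_of_lt_of_le one_pos hp1
  have hc0 : (0:ℝ) < c := lt_trans one_pos hc
  rcases eq_or_lt_of_le hu with h | hu0
  · -- u = 0, hence B = 0
    have hB : B = 0 := le_antisymm (by rw [← h] at h2; simpa using h2) (h.symm ▸ h1 : (0:ℝ) ≤ B)
    subst hB
    rw [← h, Real.zero_rpow (ne_of_gt hp0)]
    simp
  · -- u > 0
    set h : ℝ → ℝ := fun x => p * u * x ^ (p - 1) + (1 - p) * x ^ p with hh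
    have hderiv : ∀ x ∈ interior (Ici u), HasDerivAt h
        (p * u * ((p-1) * x ^ (p - 1 - 1)) + (1 - p) * (p * x ^ (p - 1))) x := by
      intro x hx
      rw [interior_Ici] at hx
      have hx0 : (0:ℝ) < x := lt_trans hu0 hx
      have d1 := (Real.hasDerivAt_rpow_const (p := p - 1) (Or.inl (ne_of_gt hx0))).const_mul (p * u)
      have d2 := (Real.hasDerivAt_rpow_const (p := p) (Or.inl (ne_of_gt hx0))).const_mul (1 - p)
      exact d1.add d2
    have hcont : ContinuousOn h (Ici u) := by
      apply ContinuousOn.add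
      · exact continuousOn_const.mul (continuousOn_id.rpow_const
          (fun x hx => Or.inl (ne_of_gt (lt_of_lt_of_le hu0 hx))))
      · exact continuousOn_const.mul (continuousOn_id.rpow_const
          (fun x hx => Or.inl (ne_of_gt (lt_of_lt_of_le hu0 hx))))
    have hanti : AntitoneOn h (Ici u) := by
      apply antitoneOn_of_deriv_nonpos (convex_Ici u) hcont
      · intro x hx
        exact (hderiv x hx).differentiableAt.differentiableWithinAt
      · intro x hx
        rw [(hderiv x hx).deriv]
        rw [interior_Ici] at hx
        have hx0 : (0:ℝ) < x := lt_trans hu0 hx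
        have e1 : x ^ (p - 1) = x * x ^ (p - 1 - 1) := by
          rw [show p - 1 = 1 + (p - 1 - 1) by ring, Real.rpow_add hx0, Real.rpow_one]
          norm_num
        have e2 : (0:ℝ) ≤ x ^ (p - 1 - 1) := Real.rpow_nonneg (le_of_lt hx0) _
        rw [e1]
        nlinarith [(show u < x from hx).le, hp1, e2, mul_nonneg (mul_nonneg hp0.le (sub_nonneg.2 hp1)) e2]
    have hmem1 : B ∈ Ici u := h1
    have hmem2 : c * u ∈ Ici u := by
      simp only [mem_Ici]; nlinarith
    have key : h (c * u) ≤ h B := hanti hmem1 hmem2 h2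
    have eu : u ^ p = u * u ^ (p - 1) := by
      rw [show p = 1 + (p - 1) by ring, Real.rpow_add hu0, Real.rpow_one]
      norm_num
    have ec : c ^ p = c * c ^ (p - 1) := by
      rw [show p = 1 + (p - 1) by ring, Real.rpow_add hc0, Real.rpow_one]
      norm_num
    have hval : h (c * u) = c ^ (p - 1) * (c + p - p * c) * u ^ p := by
      simp only [hh]
      rw [Real.mul_rpow hc0.le hu, Real.mul_rpow hc0.le hu, ec]
      linear_combination (-(p * c ^ (p - 1))) * eu
    rw [← hval]; exact key

theorem reverse_holder_of_A1_rearranged (c p : ℝ) (hc : 1 < c)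
    (hp1 : 1 ≤ p) (hp2 : p < c / (c - 1))
    (g : ℝ → ℝ) (hg0 : ∀ t ∈ Ioc (0:ℝ) 1, 0 ≤ g t)
    (hmono : AntitoneOn g (Ioc (0:ℝ) 1))
    (hint : IntegrableOn g (Ioc (0:ℝ) 1))
    (hA1 : ∀ t ∈ Ioc (0:ℝ) 1, (1/t) * ∫ y in Ioc (0:ℝ) t, g y ≤ c * g t) :
    ∫ y in Ioc (0:ℝ) 1, g y ^ p
      ≤ (1 / (c ^ (p - 1) * (c + p - p * c))) * (∫ y in Ioc (0:ℝ) 1, g y) ^ p := by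
  have hc0 : (0:ℝ) < c := lt_trans one_pos hc
  have hc1 : (0:ℝ) < c - 1 := by linarith
  have hp0 : (0:ℝ) < p := lt_of_lt_of_le one_pos hp1
  have hKa : 0 < c + p - p * c := by
    have := (lt_div_iff₀ hc1).mp hp2; nlinarith
  have hKb : (0:ℝ) < c ^ (p - 1) := Real.rpow_pos_of_pos hc0 _
  set K : ℝ := c ^ (p - 1) * (c + p - p * c) with hKdef
  have hK0 : 0 < K := mul_pos hKb hKa
  set G : ℝ → ℝ := fun t => ∫ y in Ioc (0:ℝ) t, g y with hGdef
  -- basic facts about G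
  have hsub : ∀ t ∈ Icc (0:ℝ) 1, Ioc (0:ℝ) t ⊆ Ioc (0:ℝ) 1 :=
    fun t ht => Ioc_subset_Ioc le_rfl ht.2
  have hGint : ∀ t ∈ Icc (0:ℝ) 1, IntegrableOn g (Ioc 0 t) :=
    fun t ht => hint.mono_set (hsub t ht)
  have hGnn : ∀ t ∈ Icc (0:ℝ) 1, 0 ≤ G t := by
    intro t ht
    exact setIntegral_nonneg measurableSet_Ioc (fun y hy => hg0 y (hsub t ht hy))
  have hGmono : ∀ s ∈ Icc (0:ℝ) 1, ∀ t ∈ Icc (0:ℝ) 1, s ≤ t → G s ≤ G t := by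
    intro s hs t ht hst
    apply setIntegral_mono_set (hGint t ht)
    · filter_upwards [self_mem_ae_restrict (measurableSet_Ioc : MeasurableSet (Ioc (0:ℝ) t))]
        with y hy
      exact hg0 y (hsub t ht hy)
    · exact HasSubset.Subset.eventuallyLE (Ioc_subset_Ioc le_rfl hst)
  have hGcont : ContinuousOn G (Icc 0 1) :=
    intervalIntegral.continuousOn_primitive ((integrableOn_Icc_iff_integrableOn_Ioc (by simp)).2 hint)
  -- lower bound: t * g t ≤ G t
  have htg : ∀ t ∈ Ioc (0:ℝ) 1, t * g t ≤ G t := by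
    intro t ht
    have h1 : ∫ _ in Ioc (0:ℝ) t, g t ≤ ∫ y in Ioc (0:ℝ) t, g y := by
      apply setIntegral_mono_on (integrableOn_const (by simp [ht.1]))
        (hGint t ⟨ht.1.le, ht.2⟩) measurableSet_Ioc
      intro y hy
      exact hmono (hsub t ⟨ht.1.le, ht.2⟩ hy) ht hy.2
    simpa [Real.volume_Ioc, ht.1.le, smul_eq_mul] using h1
  -- A1 bound: G t ≤ c * (t * g t)
  have hGA1 : ∀ t ∈ Ioc (0:ℝ) 1, G t ≤ c * (t * g t) := by
    intro t ht
    have := hA1 t ht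
    have ht0 : (0:ℝ) < t := ht.1
    rw [div_mul_eq_mul_div, one_mul, div_le_iff₀ ht0] at this
    calc G t = G t := rfl
    _ ≤ c * g t * t := this
    _ = c * (t * g t) := by ring
  -- the right-limit function
  set q : ℝ → ℝ := fun t => sSup (g '' Ioc t 1) with hqdef
  have hqne : ∀ t ∈ Ico (0:ℝ) 1, (g '' Ioc t 1).Nonempty :=
    fun t ht => (nonempty_Ioc.2 ht.2).image g
  have hqbdd : ∀ t ∈ Ioo (0:ℝ) 1, BddAbove (g '' Ioc t 1) := by
    intro t ht
    refine ⟨g t, ?_⟩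
    rintro y ⟨s, hs, rfl⟩
    exact hmono ⟨ht.1, ht.2.le⟩ ⟨lt_trans ht.1 hs.1, hs.2⟩ hs.1.le
  have hq_le : ∀ t ∈ Ioo (0:ℝ) 1, q t ≤ g t := by
    intro t ht
    apply csSup_le (hqne t ⟨ht.1.le, ht.2⟩)
    rintro y ⟨s, hs, rfl⟩
    exact hmono ⟨ht.1, ht.2.le⟩ ⟨lt_trans ht.1 hs.1, hs.2⟩ hs.1.le
  have hq_ge : ∀ t ∈ Ioo (0:ℝ) 1, ∀ s ∈ Ioc t 1, g s ≤ q t :=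
    fun t ht s hs => le_csSup (hqbdd t ht) (mem_image_of_mem g hs)
  have hq_nn : ∀ t ∈ Ioo (0:ℝ) 1, 0 ≤ q t := by
    intro t ht
    exact le_trans (hg0 1 ⟨one_pos, le_rfl⟩) (hq_ge t ht 1 ⟨ht.2, le_rfl⟩)
  have hq_tendsto : ∀ t ∈ Ioo (0:ℝ) 1, Filter.Tendsto g (nhdsWithin t (Ioi t)) (nhds (q t)) := by
    intro t ht
    rw [tendsto_order]
    constructor
    · intro a ha
      obtain ⟨y, ⟨s, hs, rfl⟩, hy⟩ := exists_lt_of_lt_csSup (hqne t ⟨ht.1.le, ht.2⟩) ha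
      filter_upwards [Ioc_mem_nhdsGT_of_mem (⟨le_rfl, hs.1⟩ : t ∈ Ico t s)] with z hz
      exact lt_of_lt_of_le hy
        (hmono ⟨lt_trans ht.1 hz.1, le_trans hz.2 hs.2⟩ ⟨lt_trans ht.1 hs.1, hs.2⟩ hz.2)
    · intro a ha
      filter_upwards [Ioc_mem_nhdsGT_of_mem (⟨le_rfl, ht.2⟩ : t ∈ Ico t 1)] with z hz
      exact lt_of_le_of_lt (hq_ge t ht z hz) ha
  -- q-versions of bounds
  have hq_lb : ∀ t ∈ Ioo (0:ℝ) 1, t * q t ≤ G t := by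
    intro t ht
    have h1 : t * q t ≤ t * g t := mul_le_mul_of_nonneg_left (hq_le t ht) ht.1.le
    exact le_trans h1 (htg t ⟨ht.1, ht.2.le⟩)
  have hq_ub : ∀ t ∈ Ioo (0:ℝ) 1, G t ≤ c * (t * q t) := by
    intro t ht
    have hev : ∀ᶠ s in nhdsWithin t (Ioi t), G t ≤ c * (s * q t) := by
      filter_upwards [Ioc_mem_nhdsGT_of_mem (⟨le_rfl, ht.2⟩ : t ∈ Ico t 1)] with s hs
      have h1 : G t ≤ G s := hGmono t ⟨ht.1.le, ht.2.le⟩ s ⟨le_trans ht.1.le hs.1.le, hs.2⟩ hs.1.le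
      have h2 : G s ≤ c * (s * g s) := hGA1 s ⟨lt_trans ht.1 hs.1, hs.2⟩
      have h3 : c * (s * g s) ≤ c * (s * q t) := by
        apply mul_le_mul_of_nonneg_left _ hc0.le
        exact mul_le_mul_of_nonneg_left (hq_ge t ht s hs) (le_trans ht.1.le hs.1.le)
      linarith
    have hlim : Filter.Tendsto (fun s => c * (s * q t)) (nhdsWithin t (Ioi t))
        (nhds (c * (t * q t))) := by
      apply Filter.Tendsto.mono_left _ nhdsWithin_le_nhds
      exact (continuous_const.mul (continuous_id.mul continuous_const)).tendsto t
    exact ge_of_tendsto hlim hev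
  -- FTC: right derivative of G is q
  have hGderiv : ∀ t ∈ Ioo (0:ℝ) 1, HasDerivWithinAt G (q t) (Ioi t) t := by
    intro t ht
    have hii : IntervalIntegrable g volume 0 t :=
      (intervalIntegrable_iff_integrableOn_Ioc_of_le ht.1.le).2 (hGint t ⟨ht.1.le, ht.2.le⟩)
    have hmeas : StronglyMeasurableAtFilter g (nhdsWithin t (Ioi t)) volume := by
      refine ⟨Ioc t 1, Ioc_mem_nhdsGT_of_mem (⟨le_rfl, ht.2⟩ : t ∈ Ico t 1), ?_⟩
      exact hint.aestronglyMeasurable.mono_measure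
        (Measure.restrict_mono (Ioc_subset_Ioc ht.1.le le_rfl) le_rfl)
    have hd : HasDerivWithinAt (fun u => ∫ x in (0:ℝ)..u, g x) (q t) (Ici t) t :=
      intervalIntegral.integral_hasDerivWithinAt_of_tendsto_ae_right hii hmeas
        ((hq_tendsto t ht).mono_left inf_le_left)
    have hd2 := hd.mono (Ioi_subset_Ici (le_refl t))
    apply hd2.congr
    · intro y hy
      rw [intervalIntegral.integral_of_le (le_of_lt (lt_trans ht.1 hy)), hGdef]
    · rw [intervalIntegral.integral_of_le ht.1.le, hGdef]
  -- the auxiliary function psi and its right derivative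
  set ψ : ℝ → ℝ := fun t => G t ^ p * t ^ (1 - p) with hψdef
  set D : ℝ → ℝ := fun t =>
    q t * p * G t ^ (p - 1) * t ^ (1 - p) + G t ^ p * ((1 - p) * t ^ (1 - p - 1)) with hDdef
  have hψderiv : ∀ t ∈ Ioo (0:ℝ) 1, HasDerivWithinAt ψ (D t) (Ioi t) t := by
    intro t ht
    have h1 : HasDerivWithinAt (fun u => G u ^ p) (q t * p * G t ^ (p - 1)) (Ioi t) t := by
      have := (hGderiv t ht).rpow_const (p := p) (Or.inr hp1)
      convert this using 1
    have h2 : HasDerivWithinAt (fun u : ℝ => u ^ (1 - p)) ((1 - p) * t ^ (1 - p - 1)) (Ioi t) t :=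
      (Real.hasDerivAt_rpow_const (p := 1 - p) (Or.inl (ne_of_gt ht.1))).hasDerivWithinAt
    have := h1.mul h2
    convert this using 1
    all_goals rfl
  -- pointwise inequality : K * q t ^ p ≤ D t
  have hpt : ∀ t ∈ Ioo (0:ℝ) 1, K * q t ^ p ≤ D t := by
    intro t ht
    have ht0 : (0:ℝ) < t := ht.1
    set B : ℝ := G t / t with hBdef
    have hB0 : 0 ≤ B := div_nonneg (hGnn t ⟨ht.1.le, ht.2.le⟩) ht0.le
    have hGB : G t = t * B := by rw [hBdef]; field_simp
    have hB1 : q t ≤ B := (le_div_iff₀ ht0).2 (by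
      have := hq_lb t ht; linarith [hq_lb t ht])
    have hB2 : B ≤ c * q t := (div_le_iff₀ ht0).2 (by
      have := hq_ub t ht; nlinarith [hq_ub t ht])
    have hcore := rh_core c p hc hp1 (q t) B (hq_nn t ht) hB1 hB2
    have e1 : G t ^ (p - 1) = t ^ (p - 1) * B ^ (p - 1) := by
      rw [hGB, Real.mul_rpow ht0.le hB0]
    have e2 : G t ^ p = t ^ p * B ^ p := by
      rw [hGB, Real.mul_rpow ht0.le hB0]
    have e3 : t ^ (p - 1) * t ^ (1 - p) = 1 := by
      rw [← Real.rpow_add ht0]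
      norm_num
    have e4 : t ^ p * t ^ (1 - p - 1) = 1 := by
      rw [← Real.rpow_add ht0]
      norm_num
    have hD : D t = p * q t * B ^ (p - 1) + (1 - p) * B ^ p := by
      simp only [hDdef]
      rw [e1, e2]
      calc q t * p * (t ^ (p - 1) * B ^ (p - 1)) * t ^ (1 - p)
            + t ^ p * B ^ p * ((1 - p) * t ^ (1 - p - 1))
          = p * q t * B ^ (p - 1) * (t ^ (p - 1) * t ^ (1 - p))
            + (1 - p) * B ^ p * (t ^ p * t ^ (1 - p - 1)) := by ring
        _ = p * q t * B ^ (p - 1) + (1 - p) * B ^ p := by rw [e3, e4]; ring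
    rw [hD, hKdef]
    exact hcore
  -- main estimate for each epsilon
  have hrpow_cont : Continuous (fun x : ℝ => x ^ p) := by
    rw [continuous_iff_continuousAt]
    intro x
    exact Real.continuousAt_rpow_const x p (Or.inr hp0.le)
  have hIccsub : ∀ ε ∈ Ioo (0:ℝ) 1, Icc ε 1 ⊆ Ioc (0:ℝ) 1 :=
    fun ε hε => Icc_subset_Ioc_iff (hε.2.le) |>.2 ⟨hε.1, le_rfl⟩
  have main_eps : ∀ ε ∈ Ioo (0:ℝ) 1, IntegrableOn (fun y => g y ^ p) (Ioc ε 1) ∧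
      ∫ y in Ioc ε 1, g y ^ p ≤ K⁻¹ * G 1 ^ p := by
    intro ε hε
    -- clamped version of g, globally antitone
    set π : ℝ → ℝ := fun t => max (min t 1) ε with hπdef
    set g' : ℝ → ℝ := fun t => g (π t) with hg'def
    have hπmono : Monotone π := (monotone_id.min monotone_const).max monotone_const
    have hπmem : ∀ t, π t ∈ Icc ε 1 := by
      intro t
      constructor
      · exact le_max_right _ _
      · exact max_le (min_le_right _ _) hε.2.le
    have hg'anti : Antitone g' := by
      intro a b hab
      exact hmono (hIccsub ε hε (hπmem a)) (hIccsub ε hε (hπmem b)) (hπmono hab)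
    have hS : Set.Countable {x | ¬ContinuousAt g' x} := hg'anti.countable_not_continuousAt
    -- q = g away from discontinuities of g'
    have hqg : ∀ t ∈ Ioo ε 1, ContinuousAt g' t → q t = g t := by
      intro t ht hct
      have hteq : g =ᶠ[nhds t] g' := by
        filter_upwards [isOpen_Ioo.mem_nhds ht] with y hy
        have : π y = y := by
          simp only [hπdef]
          rw [min_eq_left hy.2.le, max_eq_left hy.1.le]
        simp only [hg'def, this]
      have hcg : ContinuousAt g t := hct.congr hteq.symm
      have h1 : Filter.Tendsto g (nhdsWithin t (Ioi t)) (nhds (g t)) :=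
        hcg.continuousWithinAt.tendsto
      exact tendsto_nhds_unique (hq_tendsto t ⟨lt_trans hε.1 ht.1, ht.2⟩) h1
    have hae : (fun y => q y) =ᵐ[volume.restrict (Icc ε 1)] g := by
      have hz : volume ({x | ¬ContinuousAt g' x} ∪ {ε, 1}) = 0 :=
        measure_union_null (hS.measure_zero _)
          (((Set.countable_singleton 1).insert ε).measure_zero _)
      rw [Filter.EventuallyEq, ae_restrict_iff' measurableSet_Icc, ae_iff]
      apply measure_mono_null _ hz
      intro y hy
      simp only [mem_setOf_eq, not_forall] at hy
      obtain ⟨hy1, hy2⟩ := hy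
      by_cases hy3 : y ∈ Ioo ε 1
      · left
        intro hcont
        exact hy2 (hqg y hy3 hcont)
      · right
        rcases eq_or_lt_of_le hy1.1 with h | h
        · exact Or.inl h.symm
        · have : y = 1 := le_antisymm hy1.2 (by
            by_contra hlt
            exact hy3 ⟨h, lt_of_not_ge hlt⟩)
          exact Or.inr (by simp [this])
    -- integrability of g^p on Icc ε 1
    have hgm : AEStronglyMeasurable (fun y => g y ^ p) (volume.restrict (Icc ε 1)) := by
      have h0 : AEStronglyMeasurable g (volume.restrict (Icc ε 1)) :=
        hint.aestronglyMeasurable.mono_measure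
          (Measure.restrict_mono (hIccsub ε hε) le_rfl)
      exact hrpow_cont.comp_aestronglyMeasurable h0
    have hbound : IntegrableOn (fun y => g y ^ p) (Icc ε 1) := by
      refine ⟨hgm, HasFiniteIntegral.restrict_of_bounded (C := g ε ^ p)
        measure_Icc_lt_top ?_⟩
      rw [ae_restrict_iff' measurableSet_Icc]
      filter_upwards with y hy
      have hy01 : y ∈ Ioc (0:ℝ) 1 := hIccsub ε hε hy
      have h1 : g y ≤ g ε := hmono ⟨hε.1, hε.2.le⟩ hy01 hy.1
      rw [Real.norm_eq_abs, abs_of_nonneg (Real.rpow_nonneg (hg0 y hy01) p)]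
      exact Real.rpow_le_rpow (hg0 y hy01) h1 hp0.le
    have haeK : (fun y => K * g y ^ p) =ᵐ[volume.restrict (Icc ε 1)]
        (fun y => K * q y ^ p) := by
      filter_upwards [hae] with y hy
      rw [hy]
    have hqint : IntegrableOn (fun y => K * q y ^ p) (Icc ε 1) :=
      ((hbound.const_mul K).congr haeK)
    -- FTC inequality
    have hψcont : ContinuousOn ψ (Icc ε 1) := by
      apply ContinuousOn.mul
      · exact (hGcont.mono (Icc_subset_Icc hε.1.le le_rfl)).rpow_const
          (fun x hx => Or.inr hp0.le)
      · exact continuousOn_id.rpow_const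
          (fun x hx => Or.inl (ne_of_gt (lt_of_lt_of_le hε.1 hx.1)))
    have hftc : (∫ y in ε..1, K * q y ^ p) ≤ ψ 1 - ψ ε := by
      apply intervalIntegral.integral_le_sub_of_hasDeriv_right_of_le hε.2.le hψcont
        (fun x hx => hψderiv x ⟨lt_trans hε.1 hx.1, hx.2⟩) hqint
        (fun x hx => hpt x ⟨lt_trans hε.1 hx.1, hx.2⟩)
    have hψ1 : ψ 1 = G 1 ^ p := by
      simp only [hψdef]
      rw [Real.one_rpow, mul_one]
    have hψε0 : 0 ≤ ψ ε :=
      mul_nonneg (Real.rpow_nonneg (hGnn ε ⟨hε.1.le, hε.2.le⟩) _)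
        (Real.rpow_nonneg hε.1.le _)
    have h5 : ∫ y in Ioc ε 1, K * q y ^ p ≤ G 1 ^ p := by
      rw [← intervalIntegral.integral_of_le hε.2.le]
      calc (∫ y in ε..1, K * q y ^ p) ≤ ψ 1 - ψ ε := hftc
        _ ≤ ψ 1 := by linarith
        _ = G 1 ^ p := hψ1
    have h6 : ∫ y in Ioc ε 1, K * q y ^ p = K * ∫ y in Ioc ε 1, g y ^ p := by
      rw [← integral_const_mul]
      apply integral_congr_ae
      apply ae_restrict_of_ae_restrict_of_subset Ioc_subset_Icc_self
      filter_upwards [hae] with y hy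
      rw [hy]
    have h7 : ∫ y in Ioc ε 1, g y ^ p ≤ K⁻¹ * G 1 ^ p := by
      have h8 : K * ∫ y in Ioc ε 1, g y ^ p ≤ G 1 ^ p := by rw [← h6]; exact h5
      have := mul_le_mul_of_nonneg_left h8 (inv_nonneg.2 hK0.le)
      rwa [← mul_assoc, inv_mul_cancel₀ (ne_of_gt hK0), one_mul] at this
    exact ⟨hbound.mono_set Ioc_subset_Icc_self, h7⟩
  -- monotone convergence over the sets Ioc (n+2)⁻¹ 1
  set s : ℕ → Set ℝ := fun n => Ioc ((n + 2 : ℝ)⁻¹) 1 with hsdef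
  have hεn : ∀ n : ℕ, ((n + 2 : ℝ)⁻¹) ∈ Ioo (0:ℝ) 1 := by
    intro n
    constructor
    · positivity
    · rw [inv_lt_one_iff₀]
      right
      have : (0:ℝ) ≤ (n:ℝ) := Nat.cast_nonneg n
      linarith
  have hun : (⋃ n, s n) = Ioc (0:ℝ) 1 := by
    ext y
    simp only [hsdef, mem_iUnion, mem_Ioc]
    constructor
    · rintro ⟨n, h1, h2⟩
      exact ⟨lt_trans (hεn n).1 h1, h2⟩
    · rintro ⟨h1, h2⟩
      obtain ⟨n, hn⟩ := exists_nat_gt (1 / y)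
      refine ⟨n, ?_, h2⟩
      rw [inv_eq_one_div, div_lt_iff₀ (by positivity)]
      have h3 : 1 / y < (n:ℝ) + 2 := by linarith
      rw [div_lt_iff₀ h1] at h3
      linarith
  have hdir : Directed (· ⊆ ·) s := by
    apply Monotone.directed_le
    intro a b hab
    apply Ioc_subset_Ioc_left
    apply inv_anti₀ (by positivity)
    have : (a:ℝ) ≤ (b:ℝ) := Nat.cast_le.2 hab
    linarith
  set F : ℝ → ENNReal := fun y => ENNReal.ofReal (g y ^ p) with hFdef
  have hFn : ∀ n, ∫⁻ y in s n, F y = ENNReal.ofReal (∫ y in s n, g y ^ p) := by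
    intro n
    symm
    apply ofReal_integral_eq_lintegral_ofReal ((main_eps _ (hεn n)).1)
    filter_upwards [self_mem_ae_restrict (measurableSet_Ioc : MeasurableSet (s n))] with y hy
    exact Real.rpow_nonneg (hg0 y ⟨lt_trans (hεn n).1 hy.1, hy.2⟩) p
  have hlim : ∫⁻ y in Ioc (0:ℝ) 1, F y ≤ ENNReal.ofReal (K⁻¹ * G 1 ^ p) := by
    rw [← hun, setLIntegral_iUnion_of_directed F hdir]
    apply iSup_le
    intro n
    rw [hFn n]
    exact ENNReal.ofReal_le_ofReal ((main_eps _ (hεn n)).2)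
  have hnn01 : 0 ≤ᵐ[volume.restrict (Ioc (0:ℝ) 1)] fun y => g y ^ p := by
    filter_upwards [self_mem_ae_restrict (measurableSet_Ioc : MeasurableSet (Ioc (0:ℝ) 1))]
      with y hy
    exact Real.rpow_nonneg (hg0 y hy) p
  have hmeas01 : AEStronglyMeasurable (fun y => g y ^ p) (volume.restrict (Ioc (0:ℝ) 1)) :=
    hrpow_cont.comp_aestronglyMeasurable hint.aestronglyMeasurable
  have hfin : ∫ y in Ioc (0:ℝ) 1, g y ^ p = (∫⁻ y in Ioc (0:ℝ) 1, F y).toReal :=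
    integral_eq_lintegral_of_nonneg_ae hnn01 hmeas01
  have hnnK : 0 ≤ K⁻¹ * G 1 ^ p :=
    mul_nonneg (inv_nonneg.2 hK0.le) (Real.rpow_nonneg (hGnn 1 ⟨zero_le_one, le_rfl⟩) p)
  calc ∫ y in Ioc (0:ℝ) 1, g y ^ p = (∫⁻ y in Ioc (0:ℝ) 1, F y).toReal := hfin
    _ ≤ (ENNReal.ofReal (K⁻¹ * G 1 ^ p)).toReal :=
        ENNReal.toReal_mono ENNReal.ofReal_ne_top hlim
    _ = K⁻¹ * G 1 ^ p := ENNReal.toReal_ofReal hnnK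
    _ = (1 / K) * G 1 ^ p := by rw [one_div]
end

section
/- Let c > 1 and g : (0,1] → ℝ≥0 be non-increasing, integrable, satisfying (1/t)·∫₀ᵗ g(y) dy ≤ c·g(t) for all t ∈ (0,1]. Then for every p with 1 ≤ p < c/(c−1), g^p is integrable on (0,1], i.e. g ∈ L^p(0,1]. -/
open MeasureTheory Set

theorem Lp_integrability_of_A1_rearranged (c : ℝ) (hc : 1 < c)
    (g : ℝ → ℝ) (hg0 : ∀ t ∈ Ioc (0:ℝ) 1, 0 ≤ g t)
    (hmono : AntitoneOn g (Ioc (0:ℝ) 1))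
    (hint : IntegrableOn g (Ioc (0:ℝ) 1))
    (hA1 : ∀ t ∈ Ioc (0:ℝ) 1, (1/t) * ∫ y in Ioc (0:ℝ) t, g y ≤ c * g t) :
    ∀ p : ℝ, 1 ≤ p → p < c / (c - 1) →
      IntegrableOn (fun y => g y ^ p) (Ioc (0:ℝ) 1) := by
  intro p hp1 hpc
  have hc0 : (0:ℝ) < c := lt_trans one_pos hc
  have hp0 : (0:ℝ) < p := lt_of_lt_of_le one_pos hp1
  have hkey : c * (p - 1) < p := by
    have := (lt_div_iff₀ (by linarith : (0:ℝ) < c - 1)).mp hpc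
    nlinarith
  -- choice of parameters
  set ε : ℝ := (p - c * (p - 1)) / (2 * p) with hεdef
  have hε0 : 0 < ε := by
    apply div_pos; linarith; linarith
  have hεhalf : ε ≤ 1 / 2 := by
    rw [hεdef, div_le_div_iff₀ (by linarith) (by norm_num)]
    nlinarith [mul_nonneg hc0.le (by linarith : (0:ℝ) ≤ p - 1)]
  set lam : ℝ := 1 - ε with hlamdef
  set q : ℝ := 1 - ε / c with hqdef
  set β : ℝ := (1 - ε) / c with hβdef
  clear_value ε lam q β
  have hlam0 : 0 < lam := by rw [hlamdef]; linarith
  have hlam1 : lam < 1 := by rw [hlamdef]; linarith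
  have hεc : ε / c < 1 := by
    rw [div_lt_one hc0]; linarith
  have hq0 : 0 < q := by rw [hqdef]; linarith
  have hq1 : q < 1 := by
    have : 0 < ε / c := div_pos hε0 hc0
    rw [hqdef]; linarith
  have hβ0 : 0 < β := by rw [hβdef]; apply div_pos; linarith; exact hc0
  have hβ1 : β < 1 := by
    rw [hβdef, div_lt_one hc0]; linarith
  have hpβ : p - 1 < p * β := by
    have hβval : p * β = (p + c * (p - 1)) / (2 * c) := by
      rw [hβdef, hεdef]; field_simp; ring
    rw [hβval, lt_div_iff₀ (by positivity : (0:ℝ) < 2 * c)]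
    nlinarith
  -- q ≤ lam ^ β
  have hqβ : q ≤ lam ^ β := by
    have h1 : Real.log q ≤ -(ε / c) := by
      have := Real.log_le_sub_one_of_pos hq0
      rw [hqdef] at this ⊢; linarith
    have h2 : -(ε / (1 - ε)) ≤ Real.log lam := by
      have hpos : (0:ℝ) < 1 - ε := by linarith
      have := Real.log_le_sub_one_of_pos (show (0:ℝ) < (1 - ε)⁻¹ by positivity)
      rw [Real.log_inv] at this
      have hval : (1 - ε)⁻¹ - 1 = ε / (1 - ε) := by field_simp; ring
      rw [hval] at this
      rw [hlamdef]; linarith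
    have h3 : -(ε / c) ≤ β * Real.log lam := by
      have := mul_le_mul_of_nonneg_left h2 hβ0.le
      have hval : β * -(ε / (1 - ε)) = -(ε / c) := by
        have h1ε : (1:ℝ) - ε ≠ 0 := by linarith
        rw [hβdef]; field_simp
      linarith [hval ▸ this]
    calc q = Real.exp (Real.log q) := (Real.exp_log hq0).symm
      _ ≤ Real.exp (β * Real.log lam) := Real.exp_le_exp.mpr (h1.trans h3)
      _ = lam ^ β := by rw [Real.rpow_def_of_pos hlam0, mul_comm]
  -- the primitive
  set G : ℝ → ℝ := fun t => ∫ y in Ioc (0:ℝ) t, g y with hGdef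
  clear_value G
  have hsub : ∀ t : ℝ, t ≤ 1 → Ioc (0:ℝ) t ⊆ Ioc (0:ℝ) 1 := fun t ht =>
    Ioc_subset_Ioc le_rfl ht
  have hGnonneg : ∀ t : ℝ, t ≤ 1 → 0 ≤ G t := by
    intro t ht
    rw [hGdef]
    apply setIntegral_nonneg measurableSet_Ioc
    intro x hx; exact hg0 x (hsub t ht hx)
  have hGmono : ∀ s t : ℝ, s ≤ t → t ≤ 1 → G s ≤ G t := by
    intro s t hst ht1
    rw [hGdef]
    apply setIntegral_mono_set (hint.mono_set (hsub t ht1))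
    · filter_upwards [ae_restrict_mem measurableSet_Ioc] with x hx
      exact hg0 x (hsub t ht1 hx)
    · exact HasSubset.Subset.eventuallyLE (Ioc_subset_Ioc le_rfl hst)
  -- lower bound for integrals over Ioc s t
  have hlow : ∀ s t : ℝ, 0 ≤ s → s ≤ t → t ≤ 1 → t ∈ Ioc (0:ℝ) 1 →
      (t - s) * g t ≤ ∫ y in Ioc s t, g y := by
    intro s t hs hst ht1 htm
    have hmeas : MeasurableSet (Ioc s t) := measurableSet_Ioc
    have hvol : volume (Ioc s t) ≠ ⊤ := by
      rw [Real.volume_Ioc]; exact ENNReal.ofReal_ne_top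
    have hsub2 : Ioc s t ⊆ Ioc (0:ℝ) 1 := Ioc_subset_Ioc hs ht1
    have := setIntegral_ge_of_const_le (c := g t) hmeas hvol
      (fun x hx => hmono (hsub2 hx) htm hx.2) (hint.mono_set hsub2)
    rwa [Real.volume_real_Ioc_of_le hst, smul_eq_mul] at this
  -- splitting
  have hsplit : ∀ s t : ℝ, 0 ≤ s → s ≤ t → t ≤ 1 →
      G t = G s + ∫ y in Ioc s t, g y := by
    intro s t hs hst ht1
    rw [hGdef]
    simp only
    rw [← setIntegral_union (Ioc_disjoint_Ioc_of_le le_rfl) measurableSet_Ioc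
      (hint.mono_set (Ioc_subset_Ioc le_rfl (hst.trans ht1)))
      (hint.mono_set (Ioc_subset_Ioc hs ht1)),
      Ioc_union_Ioc_eq_Ioc hs hst]
  -- A1 rephrased
  have hC : ∀ t ∈ Ioc (0:ℝ) 1, G t ≤ c * t * g t := by
    intro t ht
    have := hA1 t ht
    rw [one_div, inv_mul_le_iff₀ ht.1] at this
    rw [hGdef]
    calc (fun t => ∫ y in Ioc (0:ℝ) t, g y) t ≤ t * (c * g t) := this
      _ = c * t * g t := by ring
  -- contraction step
  have hstep : ∀ t ∈ Ioc (0:ℝ) 1, G (lam * t) ≤ q * G t := by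
    intro t ht
    have ht0 := ht.1
    have hst : lam * t ≤ t := by nlinarith
    have hs0 : 0 ≤ lam * t := by positivity
    have h1 := hsplit (lam * t) t hs0 hst ht.2
    have h2 := hlow (lam * t) t hs0 hst ht.2 ht
    have h3 := hC t ht
    have hgt0 : 0 ≤ g t := hg0 t ht
    have h4 : (ε / c) * G t ≤ (t - lam * t) * g t := by
      have htl : t - lam * t = ε * t := by rw [hlamdef]; ring
      rw [htl]
      have := mul_le_mul_of_nonneg_left h3 (le_of_lt (div_pos hε0 hc0))
      calc (ε / c) * G t ≤ (ε / c) * (c * t * g t) := this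
        _ = ε * t * g t := by field_simp
    have h5 : q * G t = G t - (ε / c) * G t := by rw [hqdef]; ring
    linarith [h1, h2, h4, h5]
  -- iterate
  have hlampow : ∀ n : ℕ, lam ^ n ∈ Ioc (0:ℝ) 1 :=
    fun n => ⟨pow_pos hlam0 n, pow_le_one₀ hlam0.le hlam1.le⟩
  have hGn : ∀ n : ℕ, G (lam ^ n) ≤ q ^ n * G 1 := by
    intro n
    induction n with
    | zero => simp
    | succ n ih =>
      have h1 : G (lam ^ (n + 1)) = G (lam * lam ^ n) := by ring_nf
      calc G (lam ^ (n + 1)) = G (lam * lam ^ n) := by rw [pow_succ, mul_comm]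
        _ ≤ q * G (lam ^ n) := hstep _ (hlampow n)
        _ ≤ q * (q ^ n * G 1) := mul_le_mul_of_nonneg_left ih hq0.le
        _ = q ^ (n + 1) * G 1 := by ring
  -- pointwise bound
  set K : ℝ := G 1 / lam ^ β with hKdef
  clear_value K
  have hK0 : 0 ≤ K := hKdef ▸ div_nonneg (hGnonneg 1 le_rfl) (Real.rpow_pos_of_pos hlam0 β).le
  have hpb : ∀ t ∈ Ioc (0:ℝ) 1, g t ≤ K * t ^ (β - 1) := by
    intro t ht
    have ht0 := ht.1
    -- find n with lam^(n+1) < t ≤ lam^n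
    obtain ⟨m, hm⟩ := exists_pow_lt_of_lt_one ht0 hlam1
    have hex : ∃ n : ℕ, lam ^ (n + 1) < t := ⟨m, lt_of_le_of_lt (by
      exact pow_le_pow_of_le_one hlam0.le hlam1.le (by omega)) hm⟩
    classical
    set n := Nat.find hex with hndef
    have hn1 : lam ^ (n + 1) < t := Nat.find_spec hex
    have hn2 : t ≤ lam ^ n := by
      rcases Nat.eq_zero_or_pos n with h0 | hpos
      · rw [h0]; simpa using ht.2
      · have hmin := Nat.find_min hex (m := n - 1) (by omega)
        push_neg at hmin
        have heq : n - 1 + 1 = n := by omega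
        rwa [heq] at hmin
    -- g t ≤ G t / t
    have h1 : t * g t ≤ G t := by
      have := hlow 0 t le_rfl ht0.le ht.2 ht
      rw [hGdef]
      simpa using this
    have h2 : G t ≤ G (lam ^ n) := hGmono t (lam ^ n) hn2 (hlampow n).2
    have h3 : G (lam ^ n) ≤ q ^ n * G 1 := hGn n
    have h4 : q ^ n ≤ (lam ^ n : ℝ) ^ β := by
      calc q ^ n ≤ (lam ^ β) ^ n := pow_le_pow_left₀ hq0.le hqβ n
        _ = lam ^ (β * n) := by rw [← Real.rpow_natCast (lam ^ β) n, ← Real.rpow_mul hlam0.le]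
        _ = (lam ^ n : ℝ) ^ β := by
            rw [← Real.rpow_natCast lam n, ← Real.rpow_mul hlam0.le, mul_comm]
    have h5 : ((lam ^ n : ℝ)) ^ β ≤ (t / lam) ^ β := by
      apply Real.rpow_le_rpow (pow_pos hlam0 n).le _ hβ0.le
      rw [le_div_iff₀ hlam0]
      calc lam ^ n * lam = lam ^ (n + 1) := by rw [pow_succ]
        _ ≤ t := hn1.le
    have hG1 : 0 ≤ G 1 := hGnonneg 1 le_rfl
    have h6 : t * g t ≤ (t / lam) ^ β * G 1 := by
      calc t * g t ≤ G t := h1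
        _ ≤ G (lam ^ n) := h2
        _ ≤ q ^ n * G 1 := h3
        _ ≤ (lam ^ n : ℝ) ^ β * G 1 := mul_le_mul_of_nonneg_right h4 hG1
        _ ≤ (t / lam) ^ β * G 1 := mul_le_mul_of_nonneg_right h5 hG1
    have h7 : (t / lam) ^ β = t ^ β / lam ^ β := Real.div_rpow ht0.le hlam0.le β
    have h8 : g t ≤ (t ^ β / lam ^ β) * G 1 / t := by
      rw [← h7]
      rw [le_div_iff₀ ht0]
      linarith [h6]
    calc g t ≤ (t ^ β / lam ^ β) * G 1 / t := h8
      _ = K * (t ^ β / t) := by rw [hKdef]; ring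
      _ = K * t ^ (β - 1) := by
          rw [Real.rpow_sub ht0, Real.rpow_one]
  -- comparison
  have hexp : (-1 : ℝ) < (β - 1) * p := by
    have : p * β - p > -1 := by linarith
    nlinarith
  have hbint : IntegrableOn (fun t : ℝ => K ^ p * t ^ ((β - 1) * p)) (Ioc (0:ℝ) 1) := by
    have := intervalIntegral.intervalIntegrable_rpow' (a := 0) (b := 1) hexp
    rw [intervalIntegrable_iff_integrableOn_Ioc_of_le (by norm_num : (0:ℝ) ≤ 1)] at this
    exact this.const_mul _
  apply Integrable.mono' hbint
  · exact ((Real.continuous_rpow_const hp0.le).measurable.comp_aemeasurable hint.aemeasurable).aestronglyMeasurable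
  · rw [ae_restrict_iff' measurableSet_Ioc]
    apply ae_of_all
    intro y hy
    have hgy := hg0 y hy
    have hy0 := hy.1
    rw [Real.norm_eq_abs, abs_of_nonneg (Real.rpow_nonneg hgy p)]
    calc g y ^ p ≤ (K * y ^ (β - 1)) ^ p :=
          Real.rpow_le_rpow hgy (hpb y hy) hp0.le
      _ = K ^ p * (y ^ (β - 1)) ^ p :=
          Real.mul_rpow hK0 (Real.rpow_nonneg hy0.le _)
      _ = K ^ p * y ^ ((β - 1) * p) := by rw [← Real.rpow_mul hy0.le]
end

section
/- The exponent range in Theorem 2 is sharp: for every c > 1, the function φ(t) = (1/c)·t^(-1+1/c) on (0,1) belongs to A₁((0,1)) with A₁-constant exactly c, but φ ∉ L^p((0,1)) for p = c/(c−1). -/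
open MeasureTheory Set

theorem sharpness_of_exponent_range (c : ℝ) (hc : 1 < c)
    (φ : ℝ → ℝ) (hφ : ∀ t ∈ Ioo (0:ℝ) 1, φ t = (1/c) * t ^ (-1 + 1/c)) :
    (∀ a b : ℝ, 0 ≤ a → a < b → b ≤ 1 →
      (1/(b-a)) * ∫ x in Ioo a b, φ x ≤ c * essInf φ (volume.restrict (Ioo a b))) ∧
    (∀ c' : ℝ, (∀ a b : ℝ, 0 ≤ a → a < b → b ≤ 1 →
      (1/(b-a)) * ∫ x in Ioo a b, φ x ≤ c' * essInf φ (volume.restrict (Ioo a b))) →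
      c ≤ c') ∧
    ¬ IntegrableOn (fun t => φ t ^ (c / (c - 1))) (Ioo (0:ℝ) 1) := by
  have hc0 : (0:ℝ) < c := lt_trans one_pos hc
  set r : ℝ := -1 + 1/c with hrdef
  have hinvc : 0 < 1/c := by positivity
  have hinvc1 : 1/c < 1 := by rw [div_lt_one hc0]; exact hc
  have hrneg : r < 0 := by simp only [hrdef]; linarith
  have hrgt : (-1:ℝ) < r := by simp only [hrdef]; linarith
  have hr1 : r + 1 = 1/c := by simp only [hrdef]; ring
  -- integral computation
  have hint : ∀ a b : ℝ, 0 ≤ a → a < b → b ≤ 1 →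
      ∫ x in Ioo a b, φ x = b ^ (1/c) - a ^ (1/c) := by
    intro a b ha hab hb1
    have hsub : Ioo a b ⊆ Ioo 0 1 := fun x hx =>
      ⟨lt_of_le_of_lt ha hx.1, lt_of_lt_of_le hx.2 hb1⟩
    have hcong : ∫ x in Ioo a b, φ x = ∫ x in Ioo a b, (1/c) * x ^ r := by
      refine setIntegral_congr_fun measurableSet_Ioo fun x hx => ?_
      exact hφ x (hsub hx)
    rw [hcong, ← MeasureTheory.integral_Ioc_eq_integral_Ioo,
        ← intervalIntegral.integral_of_le hab.le,
        intervalIntegral.integral_const_mul, integral_rpow (Or.inl hrgt), hr1]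
    field_simp
  -- key upper bound on members of the essInf-defining set
  have hub : ∀ a b : ℝ, 0 ≤ a → a < b → b ≤ 1 → ∀ m : ℝ,
      (∀ᵐ x ∂(volume.restrict (Ioo a b)), m ≤ φ x) →
      ∀ t ∈ Ioo a b, m ≤ (1/c) * t ^ r := by
    intro a b ha hab hb1 m hm t ht
    by_contra hlt
    push_neg at hlt
    have hsub : Ioo t b ⊆ {x | ¬ m ≤ φ x} := by
      intro x hx
      have hx0 : 0 < x := lt_of_le_of_lt (le_trans ha ht.1.le) hx.1
      have hx1 : x ∈ Ioo (0:ℝ) 1 := ⟨hx0, lt_of_lt_of_le hx.2 hb1⟩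
      have hxr : x ^ r ≤ t ^ r :=
        Real.rpow_le_rpow_of_nonpos (lt_of_le_of_lt ha ht.1) hx.1.le hrneg.le
      have : φ x ≤ (1/c) * t ^ r := by
        rw [hφ x hx1]
        exact mul_le_mul_of_nonneg_left hxr (by positivity)
      simp only [Set.mem_setOf_eq, not_le]
      exact lt_of_le_of_lt this hlt
    rw [ae_iff] at hm
    have h0 : (volume.restrict (Ioo a b)) (Ioo t b) = 0 :=
      le_antisymm (hm ▸ measure_mono hsub) zero_le
    rw [Measure.restrict_apply measurableSet_Ioo,
        Set.Ioo_inter_Ioo] at h0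
    rw [sup_eq_left.mpr ht.1.le, inf_idem, Real.volume_Ioo] at h0
    rw [ENNReal.ofReal_eq_zero] at h0
    have : (0:ℝ) < b - t := by linarith [ht.2]
    linarith
  -- essInf as sSup
  have hessEq : ∀ a b : ℝ, essInf φ (volume.restrict (Ioo a b)) =
      sSup {m : ℝ | ∀ᵐ x ∂(volume.restrict (Ioo a b)), m ≤ φ x} := by
    intro a b
    rw [essInf_eq_sSup]
    congr 1
    ext m
    rw [Set.mem_setOf_eq, Set.mem_setOf_eq, ae_iff]
    simp only [not_le]
  -- lower bound for essInf
  have hlb : ∀ a b : ℝ, 0 ≤ a → a < b → b ≤ 1 →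
      (1/c) * b ^ r ≤ essInf φ (volume.restrict (Ioo a b)) := by
    intro a b ha hab hb1
    rw [hessEq]
    have hmid : (a+b)/2 ∈ Ioo a b := ⟨by linarith, by linarith⟩
    refine le_csSup ⟨(1/c) * ((a+b)/2) ^ r, fun m hm => hub a b ha hab hb1 m hm _ hmid⟩ ?_
    rw [Set.mem_setOf_eq, ae_restrict_iff' measurableSet_Ioo]
    refine Filter.Eventually.of_forall fun x hx => ?_
    have hx0 : 0 < x := lt_of_le_of_lt ha hx.1
    rw [hφ x ⟨hx0, lt_of_lt_of_le hx.2 hb1⟩]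
    exact mul_le_mul_of_nonneg_left
      (Real.rpow_le_rpow_of_nonpos hx0 hx.2.le hrneg.le) (by positivity)
  refine ⟨?_, ?_, ?_⟩
  · -- Part 1
    intro a b ha hab hb1
    have hba : (0:ℝ) < b - a := by linarith
    have hb0 : (0:ℝ) < b := lt_of_le_of_lt ha hab
    have key : b ^ (1/c) - a ^ (1/c) ≤ (b - a) * b ^ r := by
      have hbb : b * b ^ r = b ^ (1/c) := by
        rw [← Real.rpow_one_add' hb0.le (by rw [add_comm, hr1]; positivity)]
        congr 1
        linarith [hr1]
      have hab' : a * b ^ r ≤ a ^ (1/c) := by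
        rcases eq_or_lt_of_le ha with h0 | ha0
        · rw [← h0, Real.zero_rpow (by positivity : (1:ℝ)/c ≠ 0)]; simp
        · have : a * b ^ r ≤ a * a ^ r :=
            mul_le_mul_of_nonneg_left
              (Real.rpow_le_rpow_of_nonpos ha0 hab.le hrneg.le) ha
          rw [← Real.rpow_one_add' ha0.le (by rw [add_comm, hr1]; positivity),
              show (1:ℝ) + r = 1/c by linarith [hr1]] at this
          exact this
        -- done
      nlinarith [hbb, hab']
    rw [hint a b ha hab hb1]
    calc (1/(b-a)) * (b ^ (1/c) - a ^ (1/c)) ≤ (1/(b-a)) * ((b-a) * b ^ r) := by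
          exact mul_le_mul_of_nonneg_left key (by positivity)
      _ = b ^ r := by field_simp
      _ = c * ((1/c) * b ^ r) := by field_simp
      _ ≤ c * essInf φ (volume.restrict (Ioo a b)) :=
          mul_le_mul_of_nonneg_left (hlb a b ha hab hb1) hc0.le
  · -- Part 2
    intro c' hc'
    have H := hc' 0 1 le_rfl one_pos le_rfl
    rw [hint 0 1 le_rfl one_pos le_rfl,
        Real.one_rpow, Real.zero_rpow (by positivity : (1:ℝ)/c ≠ 0)] at H
    have hle : essInf φ (volume.restrict (Ioo (0:ℝ) 1)) ≤ 1/c := by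
      rw [hessEq]
      have hne : (0:ℝ) ∈ {m : ℝ | ∀ᵐ x ∂(volume.restrict (Ioo (0:ℝ) 1)), m ≤ φ x} := by
        rw [Set.mem_setOf_eq, ae_restrict_iff' measurableSet_Ioo]
        refine Filter.Eventually.of_forall fun x hx => ?_
        rw [hφ x hx]
        exact mul_nonneg (by positivity) (Real.rpow_nonneg hx.1.le _)
      refine csSup_le ⟨0, hne⟩ fun m hm => ?_
      -- m ≤ (1/c) * t^r for all t ∈ (0,1); take t → 1
      by_contra hmc
      push_neg at hmc
      have hcm1 : 1 < c * m := by
        rw [div_lt_iff₀ hc0] at hmc; linarith [hmc]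
      have hu1 : (c*m) ^ (1/r) < 1 :=
        Real.rpow_lt_one_of_one_lt_of_neg hcm1 (div_neg_of_pos_of_neg one_pos hrneg)
      have hu0 : 0 < (c*m) ^ (1/r) := Real.rpow_pos_of_pos (by linarith) _
      set t := ((c*m) ^ (1/r) + 1)/2 with htdef
      have ht : t ∈ Ioo (0:ℝ) 1 :=
        ⟨by simp only [htdef]; linarith, by simp only [htdef]; linarith⟩
      have hut : (c*m) ^ (1/r) < t := by simp only [htdef]; linarith
      have htr : t ^ r < ((c*m) ^ (1/r)) ^ r :=
        Real.rpow_lt_rpow_of_neg hu0 hut hrneg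
      rw [← Real.rpow_mul (by linarith : (0:ℝ) ≤ c*m),
          one_div_mul_cancel (ne_of_lt hrneg), Real.rpow_one] at htr
      have := hub 0 1 le_rfl one_pos le_rfl m hm t ht
      have : m ≤ (1/c) * t ^ r := this
      have hlt : (1/c) * t ^ r < (1/c) * (c*m) :=
        (mul_lt_mul_iff_right₀ (by positivity : (0:ℝ) < 1/c)).2 htr
      have hcc : (1/c) * (c*m) = m := by field_simp
      linarith
    have hge : (1/c) ≤ essInf φ (volume.restrict (Ioo (0:ℝ) 1)) := by
      have := hlb 0 1 le_rfl one_pos le_rfl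
      rwa [Real.one_rpow, mul_one] at this
    have heq : essInf φ (volume.restrict (Ioo (0:ℝ) 1)) = 1/c := le_antisymm hle hge
    rw [heq] at H
    have : 1 ≤ c' * (1/c) := by
      have : (1/(1-0) : ℝ) * (1 - 0) = 1 := by norm_num
      calc (1:ℝ) = (1/(1-0)) * (1 - 0) := by norm_num
        _ ≤ c' * (1/c) := H
    calc c = c * 1 := by ring
      _ ≤ c * (c' * (1/c)) := mul_le_mul_of_nonneg_left this hc0.le
      _ = c' := by field_simp
  · -- Part 3
    intro H
    set p := c/(c-1) with hpdef
    have hc1 : (0:ℝ) < c - 1 := by linarith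
    have hp0 : 0 < p := by positivity
    have hrp : r * p = -1 := by
      simp only [hrdef, hpdef]
      field_simp
      ring
    have heq : EqOn (fun t => φ t ^ p) (fun t : ℝ => (1/c) ^ p * t ^ (-1:ℝ)) (Ioo (0:ℝ) 1) := by
      intro x hx
      simp only
      rw [hφ x hx, Real.mul_rpow (by positivity) (Real.rpow_nonneg hx.1.le _),
          ← Real.rpow_mul hx.1.le, hrp]
    have H2 : IntegrableOn (fun t : ℝ => (1/c) ^ p * t ^ (-1:ℝ)) (Ioo (0:ℝ) 1) :=
      H.congr_fun heq measurableSet_Ioo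
    have H3 : IntegrableOn (fun t : ℝ => t ^ (-1:ℝ)) (Ioo (0:ℝ) 1) := by
      have h4 : IntegrableOn (fun x : ℝ => ((1/c) ^ p)⁻¹ * ((1/c) ^ p * x ^ (-1:ℝ)))
          (Ioo (0:ℝ) 1) := H2.const_mul ((1/c) ^ p)⁻¹
      refine h4.congr_fun (fun x _ => ?_) measurableSet_Ioo
      have hk : ((1:ℝ)/c) ^ p ≠ 0 := by positivity
      dsimp only
      rw [← mul_assoc, inv_mul_cancel₀ hk, one_mul]
    rw [intervalIntegral.integrableOn_Ioo_rpow_iff one_pos] at H3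
    linarith
end

section
/- Let φ₁, φ₂ : (0,1] → ℝ≥0 be integrable with ∫₀ᵗ φ₁*(y) dy ≤ ∫₀ᵗ φ₂*(y) dy for all t ∈ (0,1]. Then for every p ≥ 1, ∫₀¹ φ₁(x)^p dx ≤ ∫₀¹ φ₂(x)^p dx. -/
open MeasureTheory Set

/-! Auxiliary lemmas for the Hardy–Littlewood–Pólya majorization principle. -/

lemma HLP_initSeg {S : Set ℝ} (hS : S ⊆ Ioc 0 1)
    (hdc : ∀ y ∈ S, ∀ z, z ∈ Ioc (0:ℝ) y → z ∈ S) :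
    ∃ t, 0 ≤ t ∧ t ≤ 1 ∧ Ioo 0 t ⊆ S ∧ S ⊆ Ioc 0 t := by
  rcases S.eq_empty_or_nonempty with h | h
  · exact ⟨0, le_refl _, zero_le_one, by simp [h], by simp [h]⟩
  · have hbdd : BddAbove S := ⟨1, fun y hy => (hS hy).2⟩
    refine ⟨sSup S, ?_, ?_, ?_, ?_⟩
    · obtain ⟨y, hy⟩ := h
      exact le_trans (hS hy).1.le (le_csSup hbdd hy)
    · exact csSup_le h (fun y hy => (hS hy).2)
    · intro z hz
      obtain ⟨y, hy, hzy⟩ := exists_lt_of_lt_csSup h hz.2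
      exact hdc y hy z ⟨hz.1, hzy.le⟩
    · intro y hy
      exact ⟨(hS hy).1, le_csSup hbdd hy⟩

lemma HLP_measSandwich {S : Set ℝ} {t : ℝ} (h1 : Ioo 0 t ⊆ S) (h2 : S ⊆ Ioc 0 t) :
    MeasurableSet S := by
  have hs : S = Ioo 0 t ∪ (S ∩ {t}) := by
    apply Subset.antisymm
    · intro y hy
      rcases lt_or_eq_of_le (h2 hy).2 with h | h
      · exact Or.inl ⟨(h2 hy).1, h⟩
      · exact Or.inr ⟨hy, h⟩
    · rintro y (hy | hy)
      · exact h1 hy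
      · exact hy.1
  rw [hs]
  exact measurableSet_Ioo.union ((Set.to_countable _).mono inter_subset_right).measurableSet

lemma HLP_aeeqSandwich {S : Set ℝ} {t : ℝ} (h1 : Ioo 0 t ⊆ S) (h2 : S ⊆ Ioc 0 t) :
    S =ᵐ[volume] Ioc (0:ℝ) t := by
  rw [MeasureTheory.ae_eq_set]
  constructor
  · rw [diff_eq_empty.mpr h2]; simp
  · apply measure_mono_null (t := {t}) ?_ (by simp)
    intro y hy
    rcases lt_or_eq_of_le hy.1.2 with h | h
    · exact absurd (h1 ⟨hy.1.1, h⟩) hy.2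
    · exact h

lemma HLP_measExt {g : ℝ → ℝ} (hg : AntitoneOn g (Ioc 0 1)) :
    Measurable (fun y => if y ∈ Ioc (0:ℝ) 1 then g y else 0) := by
  apply measurable_of_Ioi
  intro a
  have hset : (fun y => if y ∈ Ioc (0:ℝ) 1 then g y else 0) ⁻¹' Ioi a
      = {y ∈ Ioc (0:ℝ) 1 | a < g y} ∪ (if a < 0 then (Ioc (0:ℝ) 1)ᶜ else ∅) := by
    ext y
    by_cases hy : 0 < y ∧ y ≤ 1 <;> by_cases ha : a < 0 <;>
      simp [Set.mem_Ioc, hy, ha, mem_preimage]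
  rw [hset]
  have hdc : ∀ y ∈ {y ∈ Ioc (0:ℝ) 1 | a < g y}, ∀ z, z ∈ Ioc (0:ℝ) y →
      z ∈ {y ∈ Ioc (0:ℝ) 1 | a < g y} := by
    rintro y ⟨hy, hgy⟩ z hz
    have hz1 : z ∈ Ioc (0:ℝ) 1 := ⟨hz.1, hz.2.trans hy.2⟩
    exact ⟨hz1, hgy.trans_le (hg hz1 hy hz.2)⟩
  obtain ⟨t, _, _, h1, h2⟩ := HLP_initSeg (fun y hy => hy.1) hdc
  refine (HLP_measSandwich h1 h2).union ?_
  split <;> simp [measurableSet_Ioc.compl]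

/-- Hardy's lemma: if `∫₀ᵗ g₁ ≤ ∫₀ᵗ g₂` for all `t ∈ (0,1]`, then for every
nonincreasing nonnegative weight `h`, `∫ h g₁ ≤ ∫ h g₂`. -/
lemma HLP_hardy {g₁ g₂ h : ℝ → ℝ}
    (hg₁m : Measurable g₁) (hg₂m : Measurable g₂)
    (hg₁int : IntegrableOn g₁ (Ioc 0 1)) (hg₂int : IntegrableOn g₂ (Ioc 0 1))
    (hg₁0 : ∀ y ∈ Ioc (0:ℝ) 1, 0 ≤ g₁ y) (hg₂0 : ∀ y ∈ Ioc (0:ℝ) 1, 0 ≤ g₂ y)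
    (hhm : Measurable h) (hhanti : AntitoneOn h (Ioc 0 1))
    (hdom : ∀ t ∈ Ioc (0:ℝ) 1, (∫ y in Ioc (0:ℝ) t, g₁ y) ≤ ∫ y in Ioc (0:ℝ) t, g₂ y) :
    ∫⁻ y in Ioc (0:ℝ) 1, ENNReal.ofReal (h y) * ENNReal.ofReal (g₁ y)
      ≤ ∫⁻ y in Ioc (0:ℝ) 1, ENNReal.ofReal (h y) * ENNReal.ofReal (g₂ y) := by
  have lb : ∀ t, 0 ≤ t → t ≤ 1 →
      (∫⁻ y in Ioc (0:ℝ) t, ENNReal.ofReal (g₁ y))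
        ≤ ∫⁻ y in Ioc (0:ℝ) t, ENNReal.ofReal (g₂ y) := by
    intro t ht0 ht1
    rcases eq_or_lt_of_le ht0 with h0 | h0
    · simp [← h0]
    · have hsub : Ioc (0:ℝ) t ⊆ Ioc (0:ℝ) 1 := Ioc_subset_Ioc_right ht1
      have h₁nn : 0 ≤ᵐ[volume.restrict (Ioc (0:ℝ) t)] g₁ :=
        ae_restrict_of_forall_mem measurableSet_Ioc (fun y hy => hg₁0 y (hsub hy))
      have h₂nn : 0 ≤ᵐ[volume.restrict (Ioc (0:ℝ) t)] g₂ :=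
        ae_restrict_of_forall_mem measurableSet_Ioc (fun y hy => hg₂0 y (hsub hy))
      rw [← ofReal_integral_eq_lintegral_ofReal (hg₁int.mono_set hsub) h₁nn,
          ← ofReal_integral_eq_lintegral_ofReal (hg₂int.mono_set hsub) h₂nn]
      exact ENNReal.ofReal_le_ofReal (hdom t ⟨h0, ht1⟩)
  have slice : ∀ s : ℝ, 0 < s →
      (∫⁻ y in {y | s ≤ h y} ∩ Ioc (0:ℝ) 1, ENNReal.ofReal (g₁ y))
        ≤ ∫⁻ y in {y | s ≤ h y} ∩ Ioc (0:ℝ) 1, ENNReal.ofReal (g₂ y) := by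
    intro s hs
    set S : Set ℝ := {y | s ≤ h y} ∩ Ioc (0:ℝ) 1 with hS
    have hdc : ∀ y ∈ S, ∀ z, z ∈ Ioc (0:ℝ) y → z ∈ S := by
      rintro y ⟨hgy, hy⟩ z hz
      have hz1 : z ∈ Ioc (0:ℝ) 1 := ⟨hz.1, hz.2.trans hy.2⟩
      exact ⟨le_trans hgy (hhanti hz1 hy hz.2), hz1⟩
    obtain ⟨t, ht0, ht1, h1, h2⟩ := HLP_initSeg (fun y hy => hy.2) hdc
    rw [setLIntegral_congr (HLP_aeeqSandwich h1 h2),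
        setLIntegral_congr (HLP_aeeqSandwich h1 h2)]
    exact lb t ht0 ht1
  have swap : ∀ g : ℝ → ℝ, Measurable g →
      (∫⁻ y in Ioc (0:ℝ) 1, ENNReal.ofReal (h y) * ENNReal.ofReal (g y))
        = ∫⁻ s, ∫⁻ y in Ioc (0:ℝ) 1,
            Set.indicator (Ioc 0 (h y)) (fun _ => ENNReal.ofReal (g y)) s ∂volume := by
    intro g hgm
    have step1 : ∀ y : ℝ, ENNReal.ofReal (h y) * ENNReal.ofReal (g y)
        = ∫⁻ s, Set.indicator (Ioc 0 (h y)) (fun _ => ENNReal.ofReal (g y)) s ∂volume := by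
      intro y
      rw [lintegral_indicator measurableSet_Ioc, setLIntegral_const,
        Real.volume_Ioc, sub_zero, mul_comm]
    calc (∫⁻ y in Ioc (0:ℝ) 1, ENNReal.ofReal (h y) * ENNReal.ofReal (g y))
        = ∫⁻ y in Ioc (0:ℝ) 1, ∫⁻ s,
            Set.indicator (Ioc 0 (h y)) (fun _ => ENNReal.ofReal (g y)) s ∂volume := by
          exact lintegral_congr step1
      _ = _ := by
          apply lintegral_lintegral_swap
          have : Function.uncurry (fun y s =>
              Set.indicator (Ioc 0 (h y)) (fun _ => ENNReal.ofReal (g y)) s)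
            = Set.indicator {q : ℝ × ℝ | 0 < q.2 ∧ q.2 ≤ h q.1}
                (fun q => ENNReal.ofReal (g q.1)) := by
            funext q
            simp only [Function.uncurry, Set.indicator_apply, Set.mem_Ioc, Set.mem_setOf_eq]
          rw [this]
          have hset : MeasurableSet {q : ℝ × ℝ | 0 < q.2 ∧ q.2 ≤ h q.1} := by
            have : {q : ℝ × ℝ | 0 < q.2 ∧ q.2 ≤ h q.1}
                = {q : ℝ × ℝ | 0 < q.2} ∩ {q : ℝ × ℝ | q.2 ≤ h q.1} := rfl
            rw [this]
            exact (measurableSet_lt measurable_const measurable_snd).inter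
              (measurableSet_le measurable_snd (hhm.comp measurable_fst))
          exact (((ENNReal.measurable_ofReal).comp
            (hgm.comp measurable_fst)).indicator hset).aemeasurable
  rw [swap g₁ hg₁m, swap g₂ hg₂m]
  apply lintegral_mono
  intro s
  beta_reduce
  rcases le_or_gt s 0 with hs | hs
  · have : ∀ y : ℝ, Set.indicator (Ioc 0 (h y)) (fun _ => ENNReal.ofReal (g₁ y)) s = 0 := by
      intro y
      simp [Set.indicator_apply, Set.mem_Ioc, not_lt.mpr hs]
    simp [this]
  · have key : ∀ g : ℝ → ℝ,
        (∫⁻ y in Ioc (0:ℝ) 1, Set.indicator (Ioc 0 (h y)) (fun _ => ENNReal.ofReal (g y)) s)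
          = ∫⁻ y in {y | s ≤ h y} ∩ Ioc (0:ℝ) 1, ENNReal.ofReal (g y) := by
      intro g
      have : ∀ y : ℝ, Set.indicator (Ioc 0 (h y)) (fun _ => ENNReal.ofReal (g y)) s
          = Set.indicator {y | s ≤ h y} (fun y => ENNReal.ofReal (g y)) y := by
        intro y
        simp only [Set.indicator_apply, Set.mem_Ioc, Set.mem_setOf_eq, hs, true_and]
      rw [lintegral_congr this,
        lintegral_indicator (measurableSet_le measurable_const hhm),
        Measure.restrict_restrict (measurableSet_le measurable_const hhm)]
    rw [key g₁, key g₂]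
    exact slice s hs

lemma HLP_rpow_lt_iff {t a p : ℝ} (ht : 0 < t) (ha : 0 ≤ a) (hp : 0 < p) :
    t < a ^ p ↔ t ^ p⁻¹ < a := by
  constructor
  · intro h
    have := Real.rpow_lt_rpow ht.le h (inv_pos.mpr hp)
    rwa [Real.rpow_rpow_inv ha hp.ne'] at this
  · intro h
    have := Real.rpow_lt_rpow (Real.rpow_nonneg ht.le _) h hp
    rwa [Real.rpow_inv_rpow ht.le hp.ne'] at this

/-- Equimeasurable nonnegative functions have equal lower integrals of their `p`-th powers. -/
lemma HLP_equiLint {φ G : ℝ → ℝ} (hφ0 : ∀ x ∈ Ioc (0:ℝ) 1, 0 ≤ φ x) (hφm : Measurable φ)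
    (hG0 : ∀ x ∈ Ioc (0:ℝ) 1, 0 ≤ G x) (hGm : Measurable G)
    (hequi : ∀ l : ℝ, 0 < l →
      volume {x ∈ Ioc (0:ℝ) 1 | l < φ x} = volume {t ∈ Ioc (0:ℝ) 1 | l < G t})
    {p : ℝ} (hp : 0 < p) :
    (∫⁻ x in Ioc (0:ℝ) 1, ENNReal.ofReal (φ x ^ p))
      = ∫⁻ x in Ioc (0:ℝ) 1, ENNReal.ofReal (G x ^ p) := by
  have key : ∀ ψ : ℝ → ℝ, Measurable ψ → (∀ x ∈ Ioc (0:ℝ) 1, 0 ≤ ψ x) →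
      (∫⁻ x in Ioc (0:ℝ) 1, ENNReal.ofReal (ψ x ^ p))
        = ∫⁻ t in Ioi (0:ℝ), volume {x ∈ Ioc (0:ℝ) 1 | t ^ p⁻¹ < ψ x} := by
    intro ψ hψm hψ0
    have hnn : 0 ≤ᵐ[volume.restrict (Ioc (0:ℝ) 1)] fun x => ψ x ^ p :=
      ae_restrict_of_forall_mem measurableSet_Ioc
        (fun x hx => Real.rpow_nonneg (hψ0 x hx) p)
    have hmble : AEMeasurable (fun x => ψ x ^ p) (volume.restrict (Ioc (0:ℝ) 1)) :=
      ((Real.continuous_rpow_const hp.le).measurable.comp hψm).aemeasurable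
    rw [lintegral_eq_lintegral_meas_lt _ hnn hmble]
    apply setLIntegral_congr_fun measurableSet_Ioi
    intro t ht
    beta_reduce
    rw [Measure.restrict_apply]
    · congr 1
      ext x
      simp only [Set.mem_inter_iff, Set.mem_setOf_eq, Set.mem_sep_iff]
      constructor
      · rintro ⟨h1, h2⟩
        exact ⟨h2, (HLP_rpow_lt_iff ht (hψ0 x h2) hp).mp h1⟩
      · rintro ⟨h1, h2⟩
        exact ⟨(HLP_rpow_lt_iff ht (hψ0 x h1) hp).mpr h2, h1⟩
    · exact measurableSet_lt measurable_const
        ((Real.continuous_rpow_const hp.le).measurable.comp hψm)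
  rw [key φ hφm hφ0, key G hGm hG0]
  apply setLIntegral_congr_fun measurableSet_Ioi
  intro t ht
  exact hequi _ (Real.rpow_pos_of_pos ht _)

lemma HLP_young {a b p : ℝ} (ha : 0 ≤ a) (hb : 0 ≤ b) (hp : 1 ≤ p) :
    p * (b ^ (p - 1) * a) ≤ a ^ p + (p - 1) * b ^ p := by
  rcases eq_or_lt_of_le hp with h1 | h1
  · simp [← h1, Real.rpow_one, Real.rpow_zero]
  · have hpq : p.HolderConjugate (p / (p - 1)) := Real.HolderConjugate.conjExponent h1
    have hy := Real.young_inequality_of_nonneg ha (Real.rpow_nonneg hb (p - 1)) hpq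
    have hp0 : (0:ℝ) < p := lt_trans zero_lt_one h1
    have hps : p - 1 ≠ 0 := sub_ne_zero.mpr h1.ne'
    have hbq : (b ^ (p - 1)) ^ (p / (p - 1)) = b ^ p := by
      rw [← Real.rpow_mul hb]
      congr 1
      field_simp
    rw [hbq] at hy
    calc p * (b ^ (p - 1) * a) = p * (a * b ^ (p - 1)) := by ring
      _ ≤ p * (a ^ p / p + b ^ p / (p / (p - 1))) := by
          exact mul_le_mul_of_nonneg_left hy hp0.le
      _ = a ^ p + (p - 1) * b ^ p := by
          field_simp
  
lemma HLP_rpow_sub_one_mul {x p : ℝ} (hx : 0 ≤ x) (hp : 1 ≤ p) :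
    x ^ (p - 1) * x = x ^ p := by
  rcases eq_or_lt_of_le hx with h0 | h0
  · rw [← h0]
    rw [Real.zero_rpow (by linarith : p ≠ 0), mul_zero]
  · calc x ^ (p - 1) * x = x ^ (p - 1) * x ^ (1:ℝ) := by rw [Real.rpow_one]
      _ = x ^ (p - 1 + 1) := (Real.rpow_add h0 _ _).symm
      _ = x ^ p := by rw [sub_add_cancel]

theorem HLP_majorization_for_powers
    (φ₁ φ₂ : ℝ → ℝ)
    (hφ₁0 : ∀ x ∈ Ioc (0:ℝ) 1, 0 ≤ φ₁ x) (hφ₂0 : ∀ x ∈ Ioc (0:ℝ) 1, 0 ≤ φ₂ x)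
    (hφ₁int : IntegrableOn φ₁ (Ioc (0:ℝ) 1)) (hφ₂int : IntegrableOn φ₂ (Ioc (0:ℝ) 1))
    (hφ₁m : Measurable φ₁) (hφ₂m : Measurable φ₂)
    (g₁ g₂ : ℝ → ℝ)  -- the non-increasing rearrangements φ₁*, φ₂*
    (hg₁mono : AntitoneOn g₁ (Ioc (0:ℝ) 1)) (hg₂mono : AntitoneOn g₂ (Ioc (0:ℝ) 1))
    (hg₁0 : ∀ t ∈ Ioc (0:ℝ) 1, 0 ≤ g₁ t) (hg₂0 : ∀ t ∈ Ioc (0:ℝ) 1, 0 ≤ g₂ t)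
    (hequi₁ : ∀ l : ℝ, 0 < l →
      volume {x ∈ Ioc (0:ℝ) 1 | l < φ₁ x} = volume {t ∈ Ioc (0:ℝ) 1 | l < g₁ t})
    (hequi₂ : ∀ l : ℝ, 0 < l →
      volume {x ∈ Ioc (0:ℝ) 1 | l < φ₂ x} = volume {t ∈ Ioc (0:ℝ) 1 | l < g₂ t})
    (hdom : ∀ t ∈ Ioc (0:ℝ) 1,
      (∫ y in Ioc (0:ℝ) t, g₁ y) ≤ ∫ y in Ioc (0:ℝ) t, g₂ y) :
    ∀ p : ℝ, 1 ≤ p →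
      (∫⁻ x in Ioc (0:ℝ) 1, ENNReal.ofReal (φ₁ x ^ p))
        ≤ ∫⁻ x in Ioc (0:ℝ) 1, ENNReal.ofReal (φ₂ x ^ p) := by
  intro p hp
  have hp0 : (0:ℝ) < p := lt_of_lt_of_le zero_lt_one hp
  have hp1 : (0:ℝ) ≤ p - 1 := by linarith
  set G₁ : ℝ → ℝ := fun y => if y ∈ Ioc (0:ℝ) 1 then g₁ y else 0 with hG₁def
  set G₂ : ℝ → ℝ := fun y => if y ∈ Ioc (0:ℝ) 1 then g₂ y else 0 with hG₂def
  have hG₁m : Measurable G₁ := HLP_measExt hg₁mono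
  have hG₂m : Measurable G₂ := HLP_measExt hg₂mono
  have hG₁nn : ∀ y, 0 ≤ G₁ y := by
    intro y
    simp only [hG₁def]
    split
    · exact hg₁0 y ‹_›
    · exact le_refl 0
  have hG₂nn : ∀ y, 0 ≤ G₂ y := by
    intro y
    simp only [hG₂def]
    split
    · exact hg₂0 y ‹_›
    · exact le_refl 0
  have hG₁eq : EqOn G₁ g₁ (Ioc (0:ℝ) 1) := fun y hy => if_pos hy
  have hG₂eq : EqOn G₂ g₂ (Ioc (0:ℝ) 1) := fun y hy => if_pos hy
  have hequi₁' : ∀ l : ℝ, 0 < l →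
      volume {x ∈ Ioc (0:ℝ) 1 | l < φ₁ x} = volume {t ∈ Ioc (0:ℝ) 1 | l < G₁ t} := by
    intro l hl
    rw [hequi₁ l hl]
    congr 1
    ext t
    simp only [Set.mem_sep_iff]
    exact and_congr_right fun ht => by rw [hG₁eq ht]
  have hequi₂' : ∀ l : ℝ, 0 < l →
      volume {x ∈ Ioc (0:ℝ) 1 | l < φ₂ x} = volume {t ∈ Ioc (0:ℝ) 1 | l < G₂ t} := by
    intro l hl
    rw [hequi₂ l hl]
    congr 1
    ext t
    simp only [Set.mem_sep_iff]
    exact and_congr_right fun ht => by rw [hG₂eq ht]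
  rw [HLP_equiLint hφ₁0 hφ₁m (fun x _ => hG₁nn x) hG₁m hequi₁' hp0,
      HLP_equiLint hφ₂0 hφ₂m (fun x _ => hG₂nn x) hG₂m hequi₂' hp0]
  -- integrability of the rearrangements
  have hG₁int : IntegrableOn G₁ (Ioc (0:ℝ) 1) := by
    refine ⟨hG₁m.aestronglyMeasurable, ?_⟩
    rw [hasFiniteIntegral_iff_ofReal (ae_of_all _ hG₁nn)]
    have e : (∫⁻ x in Ioc (0:ℝ) 1, ENNReal.ofReal (G₁ x))
        = ∫⁻ x in Ioc (0:ℝ) 1, ENNReal.ofReal (φ₁ x) := by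
      have := HLP_equiLint hφ₁0 hφ₁m (fun x _ => hG₁nn x) hG₁m hequi₁' (p := 1) one_pos
      simpa [Real.rpow_one] using this.symm
    rw [e]
    exact (hasFiniteIntegral_iff_ofReal
      (ae_restrict_of_forall_mem measurableSet_Ioc hφ₁0)).mp hφ₁int.2
  have hG₂int : IntegrableOn G₂ (Ioc (0:ℝ) 1) := by
    refine ⟨hG₂m.aestronglyMeasurable, ?_⟩
    rw [hasFiniteIntegral_iff_ofReal (ae_of_all _ hG₂nn)]
    have e : (∫⁻ x in Ioc (0:ℝ) 1, ENNReal.ofReal (G₂ x))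
        = ∫⁻ x in Ioc (0:ℝ) 1, ENNReal.ofReal (φ₂ x) := by
      have := HLP_equiLint hφ₂0 hφ₂m (fun x _ => hG₂nn x) hG₂m hequi₂' (p := 1) one_pos
      simpa [Real.rpow_one] using this.symm
    rw [e]
    exact (hasFiniteIntegral_iff_ofReal
      (ae_restrict_of_forall_mem measurableSet_Ioc hφ₂0)).mp hφ₂int.2
  have hG₁anti : AntitoneOn G₁ (Ioc (0:ℝ) 1) := fun a ha b hb hab => by
    rw [hG₁eq ha, hG₁eq hb]; exact hg₁mono ha hb hab
  -- the truncated comparison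
  have main : ∀ M : ℕ,
      (∫⁻ y in Ioc (0:ℝ) 1, ENNReal.ofReal ((min (G₁ y) (M:ℝ)) ^ p))
        ≤ ∫⁻ x in Ioc (0:ℝ) 1, ENNReal.ofReal (G₂ x ^ p) := by
    intro M
    set f : ℝ → ℝ := fun y => min (G₁ y) (M:ℝ) with hfdef
    set h : ℝ → ℝ := fun y => f y ^ (p - 1) with hhdef
    have hfm : Measurable f := hG₁m.min measurable_const
    have hfnn : ∀ y, 0 ≤ f y := fun y => le_min (hG₁nn y) (Nat.cast_nonneg M)
    have hfle : ∀ y, f y ≤ G₁ y := fun y => min_le_left _ _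
    have hfM : ∀ y, f y ≤ (M:ℝ) := fun y => min_le_right _ _
    have hfanti : AntitoneOn f (Ioc (0:ℝ) 1) := fun a ha b hb hab =>
      min_le_min (hG₁anti ha hb hab) le_rfl
    have hhm : Measurable h := (Real.continuous_rpow_const hp1).measurable.comp hfm
    have hhanti : AntitoneOn h (Ioc (0:ℝ) 1) := fun a ha b hb hab =>
      Real.rpow_le_rpow (hfnn b) (hfanti ha hb hab) hp1
    have hfint : IntegrableOn f (Ioc (0:ℝ) 1) :=
      hG₁int.mono' hfm.aestronglyMeasurable
        (ae_of_all _ (fun y => by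
          rw [Real.norm_eq_abs, abs_of_nonneg (hfnn y)]; exact hfle y))
    have hdom' : ∀ t ∈ Ioc (0:ℝ) 1,
        (∫ y in Ioc (0:ℝ) t, f y) ≤ ∫ y in Ioc (0:ℝ) t, G₂ y := by
      intro t ht
      have hsub : Ioc (0:ℝ) t ⊆ Ioc (0:ℝ) 1 := Ioc_subset_Ioc_right ht.2
      have e2 : (∫ y in Ioc (0:ℝ) t, G₂ y) = ∫ y in Ioc (0:ℝ) t, g₂ y :=
        setIntegral_congr_fun measurableSet_Ioc (fun y hy => hG₂eq (hsub hy))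
      have e1 : (∫ y in Ioc (0:ℝ) t, f y) ≤ ∫ y in Ioc (0:ℝ) t, G₁ y :=
        setIntegral_mono_on (hfint.mono_set hsub) (hG₁int.mono_set hsub)
          measurableSet_Ioc (fun y _ => hfle y)
      have e1' : (∫ y in Ioc (0:ℝ) t, G₁ y) = ∫ y in Ioc (0:ℝ) t, g₁ y :=
        setIntegral_congr_fun measurableSet_Ioc (fun y hy => hG₁eq (hsub hy))
      rw [e2]
      calc (∫ y in Ioc (0:ℝ) t, f y) ≤ ∫ y in Ioc (0:ℝ) t, G₁ y := e1
        _ = ∫ y in Ioc (0:ℝ) t, g₁ y := e1'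
        _ ≤ ∫ y in Ioc (0:ℝ) t, g₂ y := hdom t ht
    have hardy := HLP_hardy hfm hG₂m hfint hG₂int (fun y _ => hfnn y)
      (fun y _ => hG₂nn y) hhm hhanti hdom'
    simp only [hhdef] at hardy
    set A := ∫⁻ y in Ioc (0:ℝ) 1, ENNReal.ofReal (f y ^ p) with hAdef
    have hAfin : A ≠ ⊤ := by
      have hb : A ≤ ENNReal.ofReal ((M:ℝ) ^ p) * volume (Ioc (0:ℝ) 1) := by
        rw [hAdef, ← setLIntegral_const (Ioc (0:ℝ) 1) (ENNReal.ofReal ((M:ℝ) ^ p))]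
        exact lintegral_mono fun y =>
          ENNReal.ofReal_le_ofReal (Real.rpow_le_rpow (hfnn y) (hfM y) hp0.le)
      exact ne_top_of_le_ne_top
        (ENNReal.mul_ne_top ENNReal.ofReal_ne_top (by simp [Real.volume_Ioc])) hb
    have hid : ∀ y, ENNReal.ofReal (f y ^ (p - 1)) * ENNReal.ofReal (f y)
        = ENNReal.ofReal (f y ^ p) := by
      intro y
      rw [← ENNReal.ofReal_mul (Real.rpow_nonneg (hfnn y) _),
        HLP_rpow_sub_one_mul (hfnn y) hp]
    have hmh : Measurable fun y => ENNReal.ofReal (f y ^ p) :=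
      ENNReal.measurable_ofReal.comp ((Real.continuous_rpow_const hp0.le).measurable.comp hfm)
    have hmG₂p : Measurable fun y => ENNReal.ofReal (G₂ y ^ p) :=
      ENNReal.measurable_ofReal.comp ((Real.continuous_rpow_const hp0.le).measurable.comp hG₂m)
    have hm2 : Measurable fun y => ENNReal.ofReal (f y ^ (p - 1)) * ENNReal.ofReal (G₂ y) :=
      (ENNReal.measurable_ofReal.comp hhm).mul (ENNReal.measurable_ofReal.comp hG₂m)
    have e0 : (∫⁻ y in Ioc (0:ℝ) 1,
        ENNReal.ofReal (f y ^ (p - 1)) * ENNReal.ofReal (f y)) = A := by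
      rw [hAdef]
      exact lintegral_congr hid
    have key : A + ENNReal.ofReal p * A
        ≤ (∫⁻ x in Ioc (0:ℝ) 1, ENNReal.ofReal (G₂ x ^ p)) + ENNReal.ofReal p * A := by
      calc A + ENNReal.ofReal p * A
          = A + ENNReal.ofReal p *
              ∫⁻ y in Ioc (0:ℝ) 1, ENNReal.ofReal (f y ^ (p - 1)) * ENNReal.ofReal (f y) := by
            rw [e0]
        _ ≤ A + ENNReal.ofReal p *
              ∫⁻ y in Ioc (0:ℝ) 1, ENNReal.ofReal (f y ^ (p - 1)) * ENNReal.ofReal (G₂ y) :=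
            add_le_add_right (mul_le_mul_right hardy _) A
        _ = ∫⁻ y in Ioc (0:ℝ) 1, (ENNReal.ofReal (f y ^ p)
              + ENNReal.ofReal p * (ENNReal.ofReal (f y ^ (p - 1)) * ENNReal.ofReal (G₂ y))) := by
            rw [lintegral_add_left hmh, lintegral_const_mul _ hm2, hAdef]
        _ ≤ ∫⁻ y in Ioc (0:ℝ) 1, (ENNReal.ofReal (G₂ y ^ p)
              + ENNReal.ofReal p * ENNReal.ofReal (f y ^ p)) := by
            apply lintegral_mono
            intro y
            beta_reduce
            have hyoung := HLP_young (hG₂nn y) (hfnn y) hp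
            rw [← ENNReal.ofReal_mul (Real.rpow_nonneg (hfnn y) (p - 1)),
              ← ENNReal.ofReal_mul hp0.le,
              ← ENNReal.ofReal_add (Real.rpow_nonneg (hfnn y) p)
                (mul_nonneg hp0.le (mul_nonneg (Real.rpow_nonneg (hfnn y) _) (hG₂nn y))),
              ← ENNReal.ofReal_mul hp0.le,
              ← ENNReal.ofReal_add (Real.rpow_nonneg (hG₂nn y) p)
                (mul_nonneg hp0.le (Real.rpow_nonneg (hfnn y) p))]
            exact ENNReal.ofReal_le_ofReal (by nlinarith [hyoung])
        _ = (∫⁻ x in Ioc (0:ℝ) 1, ENNReal.ofReal (G₂ x ^ p)) + ENNReal.ofReal p * A := by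
            rw [lintegral_add_left hmG₂p, lintegral_const_mul _ hmh, hAdef]
    exact (ENNReal.add_le_add_iff_right
      (ENNReal.mul_ne_top ENNReal.ofReal_ne_top hAfin)).mp key
  -- monotone convergence in the truncation level
  have hsup : ∀ y, (⨆ M : ℕ, ENNReal.ofReal ((min (G₁ y) (M:ℝ)) ^ p))
      = ENNReal.ofReal (G₁ y ^ p) := by
    intro y
    apply le_antisymm
    · exact iSup_le fun M => ENNReal.ofReal_le_ofReal
        (Real.rpow_le_rpow (le_min (hG₁nn y) (Nat.cast_nonneg M)) (min_le_left _ _) hp0.le)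
    · obtain ⟨M, hM⟩ := exists_nat_ge (G₁ y)
      refine le_trans ?_ (le_iSup _ M)
      rw [min_eq_left hM]
  have hmono : Monotone (fun (M : ℕ) (y : ℝ) => ENNReal.ofReal ((min (G₁ y) (M:ℝ)) ^ p)) := by
    intro M N hMN
    intro y
    exact ENNReal.ofReal_le_ofReal (Real.rpow_le_rpow (le_min (hG₁nn y) (Nat.cast_nonneg M))
      (min_le_min le_rfl (Nat.cast_le.mpr hMN)) hp0.le)
  calc (∫⁻ y in Ioc (0:ℝ) 1, ENNReal.ofReal (G₁ y ^ p))
      = ∫⁻ y in Ioc (0:ℝ) 1, ⨆ M : ℕ, ENNReal.ofReal ((min (G₁ y) (M:ℝ)) ^ p) :=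
        lintegral_congr fun y => (hsup y).symm
    _ = ⨆ M : ℕ, ∫⁻ y in Ioc (0:ℝ) 1, ENNReal.ofReal ((min (G₁ y) (M:ℝ)) ^ p) :=
        lintegral_iSup (fun M => ENNReal.measurable_ofReal.comp
          ((Real.continuous_rpow_const hp0.le).measurable.comp (hG₁m.min measurable_const)))
          hmono
    _ ≤ ∫⁻ x in Ioc (0:ℝ) 1, ENNReal.ofReal (G₂ x ^ p) := iSup_le main
end

section
/- Let φ₁, φ₂ : (0,1] → ℝ≥0 be integrable with ∫₀ᵗ φ₁*(y) dy ≤ ∫₀ᵗ φ₂*(y) dy for all t ∈ (0,1]. Then ∫₀¹ G(φ₁(x)) dx ≤ ∫₀¹ G(φ₂(x)) dx for every convex, non-negative, non-decreasing, left-continuous function G : [0,∞) → [0,∞). -/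
open MeasureTheory Set Filter Topology
open scoped ENNReal

namespace HLPaux

lemma antitone_level (h : ℝ → ℝ) (hh : AntitoneOn h (Ioc (0:ℝ) 1)) (m : ℝ) :
    ∃ a ∈ Icc (0:ℝ) 1, Ioo 0 a ⊆ {x ∈ Ioc (0:ℝ) 1 | m < h x} ∧
      {x ∈ Ioc (0:ℝ) 1 | m < h x} ⊆ Ioc 0 a := by
  rcases eq_empty_or_nonempty {x ∈ Ioc (0:ℝ) 1 | m < h x} with hne | hne
  · exact ⟨0, ⟨le_rfl, zero_le_one⟩, by simp, by rw [hne]; exact empty_subset _⟩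
  · have hbdd : BddAbove {x ∈ Ioc (0:ℝ) 1 | m < h x} := ⟨1, fun x hx => hx.1.2⟩
    set a := sSup {x ∈ Ioc (0:ℝ) 1 | m < h x} with ha
    have haS : ∀ x ∈ {x ∈ Ioc (0:ℝ) 1 | m < h x}, x ≤ a := fun x hx => le_csSup hbdd hx
    obtain ⟨x0, hx0⟩ := hne
    have ha0 : 0 < a := lt_of_lt_of_le hx0.1.1 (haS _ hx0)
    have ha1 : a ≤ 1 := csSup_le ⟨x0, hx0⟩ fun x hx => hx.1.2
    refine ⟨a, ⟨le_of_lt ha0, ha1⟩, ?_, fun x hx => ⟨hx.1.1, haS x hx⟩⟩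
    intro y hy
    obtain ⟨x, hxS, hyx⟩ := exists_lt_of_lt_csSup ⟨x0, hx0⟩ hy.2
    have hyI : y ∈ Ioc (0:ℝ) 1 := ⟨hy.1, (le_of_lt hyx).trans hxS.1.2⟩
    exact ⟨hyI, lt_of_lt_of_le hxS.2 (hh hyI hxS.1 hyx.le)⟩

lemma level_meas (h : ℝ → ℝ) (hh : AntitoneOn h (Ioc (0:ℝ) 1)) (m : ℝ) :
    ∃ a ∈ Icc (0:ℝ) 1, MeasurableSet {x ∈ Ioc (0:ℝ) 1 | m < h x}
      ∧ volume {x ∈ Ioc (0:ℝ) 1 | m < h x} = ENNReal.ofReal a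
      ∧ Ioo 0 a ⊆ {x ∈ Ioc (0:ℝ) 1 | m < h x} ∧ {x ∈ Ioc (0:ℝ) 1 | m < h x} ⊆ Ioc 0 a := by
  obtain ⟨a, ha, h1, h2⟩ := antitone_level h hh m
  have hdec : {x ∈ Ioc (0:ℝ) 1 | m < h x} = Ioo 0 a ∪ ({x ∈ Ioc (0:ℝ) 1 | m < h x} \ Ioo 0 a) :=
    (union_diff_cancel h1).symm
  have hsub : {x ∈ Ioc (0:ℝ) 1 | m < h x} \ Ioo 0 a ⊆ {a} := by
    intro x hx
    have hx2 := h2 hx.1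
    have : ¬ (0 < x ∧ x < a) := hx.2
    have hxa : x = a := by
      by_contra hne'
      exact this ⟨hx2.1, lt_of_le_of_ne hx2.2 hne'⟩
    simp [hxa]
  have hmeas : MeasurableSet {x ∈ Ioc (0:ℝ) 1 | m < h x} := by
    rw [hdec]
    exact measurableSet_Ioo.union (((countable_singleton a).mono hsub).measurableSet)
  refine ⟨a, ha, hmeas, ?_, h1, h2⟩
  apply le_antisymm
  · calc volume {x ∈ Ioc (0:ℝ) 1 | m < h x} ≤ volume (Ioc 0 a) := measure_mono h2
      _ = ENNReal.ofReal a := by rw [Real.volume_Ioc, sub_zero]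
  · calc ENNReal.ofReal a = volume (Ioo 0 a) := by rw [Real.volume_Ioo, sub_zero]
      _ ≤ volume {x ∈ Ioc (0:ℝ) 1 | m < h x} := measure_mono h1

lemma indicator_meas (h : ℝ → ℝ) (hh : AntitoneOn h (Ioc (0:ℝ) 1)) :
    Measurable ((Ioc (0:ℝ) 1).indicator h) := by
  apply measurable_of_Ioi
  intro c
  rcases lt_or_ge c 0 with hc | hc
  · have : (Ioc (0:ℝ) 1).indicator h ⁻¹' Ioi c =
        {x ∈ Ioc (0:ℝ) 1 | c < h x} ∪ (Ioc (0:ℝ) 1)ᶜ := by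
      ext x
      by_cases hx : x ∈ Ioc (0:ℝ) 1
      · simp only [mem_preimage, indicator_of_mem hx, mem_Ioi, mem_union, mem_sep_iff,
          mem_compl_iff]
        exact ⟨fun h' => Or.inl ⟨hx, h'⟩, fun h' => by
          rcases h' with ⟨_, h2⟩ | h2; exact h2; exact absurd hx h2⟩
      · simp only [mem_preimage, indicator_of_notMem hx, mem_Ioi, mem_union, mem_sep_iff,
          mem_compl_iff]
        exact ⟨fun _ => Or.inr hx, fun _ => hc⟩
    rw [this]
    exact ((level_meas h hh c).choose_spec.2.1).union measurableSet_Ioc.compl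
  · have : (Ioc (0:ℝ) 1).indicator h ⁻¹' Ioi c = {x ∈ Ioc (0:ℝ) 1 | c < h x} := by
      ext x
      by_cases hx : x ∈ Ioc (0:ℝ) 1
      · simp only [mem_preimage, indicator_of_mem hx, mem_Ioi, mem_sep_iff]
        exact ⟨fun h' => ⟨hx, h'⟩, fun h' => h'.2⟩
      · simp only [mem_preimage, indicator_of_notMem hx, mem_Ioi, mem_sep_iff]
        exact ⟨fun h' => absurd h' (not_lt.2 hc), fun h' => absurd h'.1 hx⟩
    rw [this]
    exact (level_meas h hh c).choose_spec.2.1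

lemma layercake (f : ℝ → ℝ) (hf : AEMeasurable f (volume.restrict (Ioc (0:ℝ) 1)))
    (hf0 : ∀ x ∈ Ioc (0:ℝ) 1, 0 ≤ f x) :
    ∫⁻ x in Ioc (0:ℝ) 1, ENNReal.ofReal (f x) =
      ∫⁻ t in Ioi (0:ℝ), volume {x ∈ Ioc (0:ℝ) 1 | t < f x} := by
  have h0 : 0 ≤ᵐ[volume.restrict (Ioc (0:ℝ) 1)] f :=
    (ae_restrict_iff' measurableSet_Ioc).2 (ae_of_all _ hf0)
  rw [lintegral_eq_lintegral_meas_lt _ h0 hf]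
  apply setLIntegral_congr_fun_ae measurableSet_Ioi
  refine ae_of_all _ fun t _ => ?_
  rw [Measure.restrict_apply' measurableSet_Ioc]
  congr 1
  ext x
  simp only [mem_setOf_eq, mem_inter_iff, mem_sep_iff]
  tauto

lemma zero_level (φ g : ℝ → ℝ)
    (hequi : ∀ l : ℝ, 0 < l →
      volume {x ∈ Ioc (0:ℝ) 1 | l < φ x} = volume {t ∈ Ioc (0:ℝ) 1 | l < g t}) :
    volume {x ∈ Ioc (0:ℝ) 1 | 0 < φ x} = volume {t ∈ Ioc (0:ℝ) 1 | 0 < g t} := by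
  have key : ∀ h : ℝ → ℝ, {x ∈ Ioc (0:ℝ) 1 | 0 < h x} =
      ⋃ n : ℕ, {x ∈ Ioc (0:ℝ) 1 | 1/(n+1) < h x} := by
    intro h; ext x
    simp only [mem_iUnion, mem_sep_iff]
    constructor
    · rintro ⟨hx, hpos⟩
      obtain ⟨n, hn⟩ := exists_nat_one_div_lt hpos
      exact ⟨n, hx, hn⟩
    · rintro ⟨n, hx, hn⟩
      exact ⟨hx, lt_trans (by positivity) hn⟩
  have dir : ∀ h : ℝ → ℝ, Directed (· ⊆ ·) (fun n : ℕ => {x ∈ Ioc (0:ℝ) 1 | 1/(n+1) < h x}) := by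
    intro h
    apply Monotone.directed_le
    intro n m hnm x hx
    refine ⟨hx.1, lt_of_le_of_lt ?_ hx.2⟩
    have h1 : (0:ℝ) < n + 1 := by positivity
    have h2 : (n:ℝ) + 1 ≤ (m:ℝ) + 1 := by exact_mod_cast Nat.succ_le_succ hnm
    exact one_div_le_one_div_of_le h1 h2
  rw [key φ, key g, Directed.measure_iUnion (dir φ), Directed.measure_iUnion (dir g)]
  exact iSup_congr fun n => hequi _ (by positivity)

lemma G_level_eq (G φ g : ℝ → ℝ)
    (hGmono : MonotoneOn G (Ici (0:ℝ)))
    (hGlc : ∀ x : ℝ, 0 < x → ContinuousWithinAt G (Iic x) x)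
    (hφ0 : ∀ x ∈ Ioc (0:ℝ) 1, 0 ≤ φ x) (hg0 : ∀ t ∈ Ioc (0:ℝ) 1, 0 ≤ g t)
    (hequi : ∀ l : ℝ, 0 < l →
      volume {x ∈ Ioc (0:ℝ) 1 | l < φ x} = volume {t ∈ Ioc (0:ℝ) 1 | l < g t})
    (m : ℝ) :
    volume {x ∈ Ioc (0:ℝ) 1 | m < G (φ x)} = volume {x ∈ Ioc (0:ℝ) 1 | m < G (g x)} := by
  by_cases hm0 : m < G 0
  · have e : ∀ h : ℝ → ℝ, (∀ x ∈ Ioc (0:ℝ) 1, 0 ≤ h x) →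
        {x ∈ Ioc (0:ℝ) 1 | m < G (h x)} = Ioc (0:ℝ) 1 := by
      intro h h0
      ext x
      simp only [mem_sep_iff]
      exact ⟨fun hx => hx.1, fun hx =>
        ⟨hx, lt_of_lt_of_le hm0 (hGmono (mem_Ici.2 le_rfl) (mem_Ici.2 (h0 x hx)) (h0 x hx))⟩⟩
    rw [e φ hφ0, e g hg0]
  · push_neg at hm0
    by_cases hbdd : BddAbove {u : ℝ | 0 ≤ u ∧ G u ≤ m}
    · have h0S : (0:ℝ) ∈ {u : ℝ | 0 ≤ u ∧ G u ≤ m} := ⟨le_rfl, hm0⟩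
      set s := sSup {u : ℝ | 0 ≤ u ∧ G u ≤ m} with hs
      have hs0 : 0 ≤ s := le_csSup hbdd h0S
      have hGs : G s ≤ m := by
        rcases eq_or_lt_of_le hs0 with heq | hpos
        · rw [← heq]; exact hm0
        · obtain ⟨u, _, hu_tend, hu_mem⟩ := exists_seq_tendsto_sSup ⟨0, h0S⟩ hbdd
          have husle : ∀ n, u n ≤ s := fun n => le_csSup hbdd (hu_mem n)
          have htend : Tendsto (fun n => G (u n)) atTop (𝓝 (G s)) :=
            (hGlc s hpos).tendsto.comp
              (tendsto_nhdsWithin_of_tendsto_nhds_of_eventually_within _ hu_tend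
                (Eventually.of_forall fun n => husle n))
          exact le_of_tendsto htend (Eventually.of_forall fun n => (hu_mem n).2)
      have key : ∀ (h : ℝ → ℝ), (∀ x ∈ Ioc (0:ℝ) 1, 0 ≤ h x) →
          {x ∈ Ioc (0:ℝ) 1 | m < G (h x)} = {x ∈ Ioc (0:ℝ) 1 | s < h x} := by
        intro h h0
        ext x
        simp only [mem_sep_iff, and_congr_right_iff]
        intro hxI
        constructor
        · intro hGm
          by_contra hle
          push_neg at hle
          exact absurd (le_trans (hGmono (mem_Ici.2 (h0 x hxI)) (mem_Ici.2 hs0) hle) hGs)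
            (not_le.2 hGm)
        · intro hsx
          by_contra hGm
          push_neg at hGm
          exact absurd (le_csSup hbdd ⟨h0 x hxI, hGm⟩) (not_le.2 hsx)
      rw [key φ hφ0, key g hg0]
      rcases eq_or_lt_of_le hs0 with heq | hpos
      · rw [← heq]
        exact zero_level φ g hequi
      · exact hequi s hpos
    · have hall : ∀ u : ℝ, 0 ≤ u → G u ≤ m := by
        intro u hu
        obtain ⟨v, hvS, hv⟩ := not_bddAbove_iff.1 hbdd u
        exact le_trans (hGmono (mem_Ici.2 hu) (mem_Ici.2 hvS.1) hv.le) hvS.2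
      have e : ∀ h : ℝ → ℝ, (∀ x ∈ Ioc (0:ℝ) 1, 0 ≤ h x) →
          {x ∈ Ioc (0:ℝ) 1 | m < G (h x)} = (∅ : Set ℝ) := by
        intro h h0
        ext x
        simp only [mem_sep_iff, mem_empty_iff_false, iff_false, not_and]
        intro hxI
        exact not_lt.2 (hall _ (h0 x hxI))
      rw [e φ hφ0, e g hg0]


noncomputable def Dslope (G : ℝ → ℝ) (u : ℝ) : ℝ :=
  sInf ((fun v => (G v - G (max u 0)) / (v - max u 0)) '' Ioi (max u 0))

section D

variable {G : ℝ → ℝ}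

lemma slope_nonneg (hGmono : MonotoneOn G (Ici (0:ℝ))) (u v : ℝ) (hu : 0 ≤ u) (hv : u < v) :
    0 ≤ (G v - G u) / (v - u) :=
  div_nonneg (sub_nonneg.2 (hGmono (mem_Ici.2 hu) (mem_Ici.2 (hu.trans hv.le)) hv.le))
    (sub_nonneg.2 hv.le)

lemma slope_im_nonempty (u : ℝ) :
    ((fun v => (G v - G (max u 0)) / (v - max u 0)) '' Ioi (max u 0)).Nonempty :=
  (nonempty_Ioi).image _

lemma slope_im_bddBelow (hGmono : MonotoneOn G (Ici (0:ℝ))) (u : ℝ) :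
    BddBelow ((fun v => (G v - G (max u 0)) / (v - max u 0)) '' Ioi (max u 0)) := by
  refine ⟨0, ?_⟩
  rintro y ⟨v, hv, rfl⟩
  exact slope_nonneg hGmono (max u 0) v (le_max_right u 0) hv

lemma Dslope_nonneg (hGmono : MonotoneOn G (Ici (0:ℝ))) (u : ℝ) : 0 ≤ Dslope G u :=
  le_csInf (slope_im_nonempty u) (by
    rintro y ⟨v, hv, rfl⟩
    exact slope_nonneg hGmono (max u 0) v (le_max_right u 0) hv)

lemma Dslope_le_slope (hGmono : MonotoneOn G (Ici (0:ℝ))) {u v : ℝ} (hu : 0 ≤ u) (hv : u < v) :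
    Dslope G u ≤ (G v - G u) / (v - u) := by
  have hmax : max u 0 = u := max_eq_left hu
  apply csInf_le (slope_im_bddBelow hGmono u)
  rw [hmax]
  exact ⟨v, hv, rfl⟩

lemma Dslope_mono (hG : ConvexOn ℝ (Ici (0:ℝ)) G) (hGmono : MonotoneOn G (Ici (0:ℝ))) :
    Monotone (Dslope G) := by
  intro u₁ u₂ h
  have h0 : max u₁ 0 ≤ max u₂ 0 := max_le_max h le_rfl
  rcases eq_or_lt_of_le h0 with heq | hlt
  · unfold Dslope; rw [heq]
  · set c₁ := max u₁ 0
    set c₂ := max u₂ 0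
    have hc₁ : 0 ≤ c₁ := le_max_right _ _
    have hc₂ : 0 ≤ c₂ := le_max_right _ _
    have step1 : Dslope G u₁ ≤ (G c₂ - G c₁) / (c₂ - c₁) :=
      csInf_le (slope_im_bddBelow hGmono u₁) ⟨c₂, hlt, rfl⟩
    refine le_trans step1 (le_csInf (slope_im_nonempty u₂) ?_)
    rintro y ⟨v, hv, rfl⟩
    exact hG.slope_mono_adjacent (mem_Ici.2 hc₁) (mem_Ici.2 (hc₂.trans (le_of_lt hv)))
      hlt hv

lemma Dslope_hasDeriv (hG : ConvexOn ℝ (Ici (0:ℝ)) G) (hGmono : MonotoneOn G (Ici (0:ℝ)))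
    {x : ℝ} (hx : 0 ≤ x) :
    HasDerivWithinAt G (Dslope G x) (Ioi x) x := by
  rw [hasDerivWithinAt_iff_tendsto_slope,
    diff_singleton_eq_self (fun h => lt_irrefl x (mem_Ioi.1 h))]
  have hmax : max x 0 = x := max_eq_left hx
  rw [tendsto_order]
  constructor
  · intro a ha
    have : ∀ v ∈ Ioi x, a < slope G x v := by
      intro v hv
      have h1 : Dslope G x ≤ (G v - G x) / (v - x) := Dslope_le_slope hGmono hx hv
      rw [slope_def_field]
      linarith
    filter_upwards [self_mem_nhdsWithin] using this
  · intro a ha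
    have ha' : sInf ((fun v => (G v - G x) / (v - x)) '' Ioi x) < a := by
      have : Dslope G x = sInf ((fun v => (G v - G x) / (v - x)) '' Ioi x) := by
        unfold Dslope; rw [hmax]
      linarith [this ▸ ha]
    obtain ⟨y, hy, hya⟩ := exists_lt_of_csInf_lt ((nonempty_Ioi).image _) ha'
    obtain ⟨v₀, hv₀, rfl⟩ := hy
    filter_upwards [Ioo_mem_nhdsGT_of_mem ⟨le_refl x, hv₀⟩] with v hv
    have hsl : (G v - G x) / (v - x) ≤ (G v₀ - G x) / (v₀ - x) :=
      hG.secant_mono (mem_Ici.2 hx) (mem_Ici.2 (hx.trans hv.1.le))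
        (mem_Ici.2 (hx.trans hv₀.le)) (ne_of_gt hv.1) (ne_of_gt hv₀) hv.2.le
    rw [slope_def_field]
    linarith

lemma G_right_cont (hGmono : MonotoneOn G (Ici (0:ℝ))) (hG : ConvexOn ℝ (Ici (0:ℝ)) G)
    {x : ℝ} (hx : 0 ≤ x) : ContinuousWithinAt G (Ici x) x := by
  have hb : x < x + 1 := lt_add_one x
  set σ := (G (x+1) - G x) / (x + 1 - x) with hσ
  have hupper : ∀ v ∈ Ico x (x+1), G v ≤ G x + σ * (v - x) := by
    intro v hv
    rcases eq_or_lt_of_le hv.1 with heq | hvx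
    · rw [← heq]; simp
    · have hx1 : (x:ℝ) + 1 ≠ x := by linarith
      have hvmem : v ∈ Ici (0:ℝ) := mem_Ici.2 (hx.trans hv.1)
      have hsec : (G v - G x) / (v - x) ≤ σ :=
        hG.secant_mono (mem_Ici.2 hx) hvmem
          (mem_Ici.2 (by linarith)) (ne_of_gt hvx) hx1 hv.2.le
      have hvx' : 0 < v - x := by linarith
      have := (div_le_iff₀ hvx').1 hsec
      linarith
  have hlow : ∀ v ∈ Ico x (x+1), G x ≤ G v := fun v hv =>
    hGmono (mem_Ici.2 hx) (mem_Ici.2 (hx.trans hv.1)) hv.1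
  have h1 : Tendsto (fun v : ℝ => G x + σ * (v - x)) (𝓝[Ici x] x) (𝓝 (G x)) := by
    have : Tendsto (fun v : ℝ => G x + σ * (v - x)) (𝓝 x) (𝓝 (G x + σ * (x - x))) := by
      apply Tendsto.add tendsto_const_nhds
      exact (tendsto_const_nhds.mul ((continuous_id.sub continuous_const).tendsto x))
    simpa using this.mono_left nhdsWithin_le_nhds
  refine tendsto_of_tendsto_of_tendsto_of_le_of_le' tendsto_const_nhds h1 ?_ ?_
  · filter_upwards [Ico_mem_nhdsGE hb] with v hv using hlow v hv
  · filter_upwards [Ico_mem_nhdsGE hb] with v hv using hupper v hv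

lemma G_contOn (hG : ConvexOn ℝ (Ici (0:ℝ)) G) (hGmono : MonotoneOn G (Ici (0:ℝ)))
    (hGlc : ∀ x : ℝ, 0 < x → ContinuousWithinAt G (Iic x) x)
    {y : ℝ} (hy : 0 ≤ y) : ContinuousOn G (Icc 0 y) := by
  intro x hx
  rcases eq_or_lt_of_le hx.1 with heq | hpos
  · rw [← heq]
    exact (G_right_cont hGmono hG le_rfl).mono (fun z hz => hz.1)
  · exact ((continuousAt_iff_continuous_left_right.2
      ⟨hGlc x hpos, G_right_cont hGmono hG hpos.le⟩).continuousWithinAt)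

lemma G_FTC (hG : ConvexOn ℝ (Ici (0:ℝ)) G) (hGmono : MonotoneOn G (Ici (0:ℝ)))
    (hGlc : ∀ x : ℝ, 0 < x → ContinuousWithinAt G (Iic x) x)
    {y : ℝ} (hy : 0 ≤ y) :
    ∫ u in (0:ℝ)..y, Dslope G u = G y - G 0 :=
  intervalIntegral.integral_eq_sub_of_hasDeriv_right_of_le hy
    (G_contOn hG hGmono hGlc hy)
    (fun x hx => Dslope_hasDeriv hG hGmono hx.1.le)
    ((Dslope_mono hG hGmono).intervalIntegrable)

lemma G_repr (hG : ConvexOn ℝ (Ici (0:ℝ)) G) (hG0 : ∀ x : ℝ, 0 ≤ x → 0 ≤ G x)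
    (hGmono : MonotoneOn G (Ici (0:ℝ)))
    (hGlc : ∀ x : ℝ, 0 < x → ContinuousWithinAt G (Iic x) x)
    {y : ℝ} (hy : 0 ≤ y) :
    ENNReal.ofReal (G y) = ENNReal.ofReal (G 0)
      + ∫⁻ u in Ioc (0:ℝ) y, ENNReal.ofReal (Dslope G u) := by
  have hint : IntegrableOn (Dslope G) (Ioc 0 y) volume :=
    (intervalIntegrable_iff_integrableOn_Ioc_of_le hy).1
      ((Dslope_mono hG hGmono).intervalIntegrable)
  have hio : ∫ u in (0:ℝ)..y, Dslope G u = ∫ u in Ioc (0:ℝ) y, Dslope G u :=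
    intervalIntegral.integral_of_le hy
  have h1 : ENNReal.ofReal (∫ u in Ioc (0:ℝ) y, Dslope G u)
      = ∫⁻ u in Ioc (0:ℝ) y, ENNReal.ofReal (Dslope G u) :=
    ofReal_integral_eq_lintegral_ofReal hint
      (ae_of_all _ fun u => Dslope_nonneg hGmono u)
  have hGy : G y = G 0 + ∫ u in Ioc (0:ℝ) y, Dslope G u := by
    have := G_FTC hG hGmono hGlc hy
    rw [hio] at this
    linarith
  rw [hGy, ENNReal.ofReal_add (hG0 0 le_rfl)
    (integral_nonneg fun u => Dslope_nonneg hGmono u), h1]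

end D


lemma swapT (k : ℝ → ℝ) (hk : Measurable k) (t : ℝ) :
    ∫⁻ u in Ioi t, volume {x ∈ Ioc (0:ℝ) 1 | u ≤ k x}
      = ∫⁻ x in Ioc (0:ℝ) 1, ENNReal.ofReal (k x - t) := by
  have hmS : MeasurableSet {p : ℝ × ℝ | p.1 ≤ k p.2} :=
    measurableSet_le measurable_fst (hk.comp measurable_snd)
  set f : ℝ → ℝ → ℝ≥0∞ := fun u x => ({x | u ≤ k x}).indicator 1 x with hf
  have hmf : Measurable (Function.uncurry f) := by
    have huncurry : Function.uncurry f = ({p : ℝ × ℝ | p.1 ≤ k p.2}).indicator 1 := by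
      funext p
      rcases p with ⟨u, x⟩
      simp only [Function.uncurry, hf, indicator_apply, mem_setOf_eq]
      split_ifs <;> rfl
    rw [huncurry]
    exact measurable_const.indicator hmS
  have lhs_eq : ∀ u : ℝ, volume {x ∈ Ioc (0:ℝ) 1 | u ≤ k x} = ∫⁻ x in Ioc (0:ℝ) 1, f u x := by
    intro u
    rw [hf]
    simp only
    rw [lintegral_indicator_one (measurableSet_le measurable_const hk),
      Measure.restrict_apply' measurableSet_Ioc]
    congr 1
    ext x
    simp only [mem_inter_iff, mem_setOf_eq, mem_sep_iff]
    tauto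
  calc ∫⁻ u in Ioi t, volume {x ∈ Ioc (0:ℝ) 1 | u ≤ k x}
      = ∫⁻ u in Ioi t, ∫⁻ x in Ioc (0:ℝ) 1, f u x := lintegral_congr fun u => lhs_eq u
    _ = ∫⁻ x in Ioc (0:ℝ) 1, ∫⁻ u in Ioi t, f u x := lintegral_lintegral_swap hmf.aemeasurable
    _ = ∫⁻ x in Ioc (0:ℝ) 1, ENNReal.ofReal (k x - t) := by
        refine lintegral_congr fun x => ?_
        have hfu : (fun u => f u x) = (Iic (k x)).indicator 1 := by
          funext u
          simp only [hf, indicator_apply, mem_Iic, mem_setOf_eq]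
          split_ifs <;> rfl
        rw [hfu, lintegral_indicator_one measurableSet_Iic,
          Measure.restrict_apply' measurableSet_Ioi, inter_comm, Ioi_inter_Iic,
          Real.volume_Ioc]

lemma hinge (g₁ g₂ : ℝ → ℝ)
    (hg₁mono : AntitoneOn g₁ (Ioc (0:ℝ) 1))
    (hg₁int : IntegrableOn g₁ (Ioc (0:ℝ) 1)) (hg₂int : IntegrableOn g₂ (Ioc (0:ℝ) 1))
    (hdom : ∀ t ∈ Ioc (0:ℝ) 1,
      (∫ y in Ioc (0:ℝ) t, g₁ y) ≤ ∫ y in Ioc (0:ℝ) t, g₂ y)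
    (t : ℝ) (ht : 0 ≤ t) :
    ∫⁻ x in Ioc (0:ℝ) 1, ENNReal.ofReal (g₁ x - t)
      ≤ ∫⁻ x in Ioc (0:ℝ) 1, ENNReal.ofReal (g₂ x - t) := by
  obtain ⟨a, ⟨ha0, ha1⟩, hmeas, hvol, hsub1, hsub2⟩ := level_meas g₁ hg₁mono t
  have hI : Ioc (0:ℝ) 1 = Ioc 0 a ∪ Ioc a 1 := (Ioc_union_Ioc_eq_Ioc ha0 ha1).symm
  have hzero : ∫⁻ x in Ioc a 1, ENNReal.ofReal (g₁ x - t) = 0 := by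
    have hz : ∀ᵐ x ∂volume, x ∈ Ioc a 1 →
        ENNReal.ofReal (g₁ x - t) = (fun _ : ℝ => (0:ℝ≥0∞)) x := by
      refine ae_of_all _ fun x hx => ?_
      have hxI : x ∈ Ioc (0:ℝ) 1 := ⟨lt_of_le_of_lt ha0 hx.1, hx.2⟩
      have hxnot : x ∉ {x ∈ Ioc (0:ℝ) 1 | t < g₁ x} := fun hmem =>
        absurd (hsub2 hmem).2 (not_le.2 hx.1)
      have hle : g₁ x ≤ t := by
        by_contra hlt
        exact hxnot ⟨hxI, lt_of_not_ge hlt⟩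
      exact ENNReal.ofReal_eq_zero.2 (by linarith)
    rw [setLIntegral_congr_fun_ae measurableSet_Ioc hz, lintegral_zero]
  have hsplit : ∫⁻ x in Ioc (0:ℝ) 1, ENNReal.ofReal (g₁ x - t)
      = ∫⁻ x in Ioc (0:ℝ) a, ENNReal.ofReal (g₁ x - t) := by
    rw [hI, lintegral_union measurableSet_Ioc (Ioc_disjoint_Ioc_of_le le_rfl), hzero, add_zero]
  rcases eq_or_lt_of_le ha0 with haeq | hapos
  · rw [hsplit, ← haeq]
    simp
  · -- 0 < a
    have hIocsub : Ioc (0:ℝ) a ⊆ Ioc (0:ℝ) 1 := Ioc_subset_Ioc_right ha1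
    have hvolIoc : volume (Ioc (0:ℝ) a) < ⊤ := by
      rw [Real.volume_Ioc]; exact ENNReal.ofReal_lt_top
    have hconst : IntegrableOn (fun _ : ℝ => t) (Ioc (0:ℝ) a) volume :=
      integrableOn_const hvolIoc.ne
    have hint1 : IntegrableOn (fun x => g₁ x - t) (Ioc (0:ℝ) a) volume :=
      (hg₁int.mono_set hIocsub).sub hconst
    have hint2 : IntegrableOn (fun x => g₂ x - t) (Ioc (0:ℝ) a) volume :=
      (hg₂int.mono_set hIocsub).sub hconst
    have hae_ne : ∀ᵐ x ∂(volume.restrict (Ioc (0:ℝ) a)), x ≠ a := by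
      refine ae_restrict_of_ae ?_
      rw [ae_iff]
      have : {x : ℝ | ¬x ≠ a} = {a} := by ext x; simp
      rw [this]
      exact measure_singleton a
    have hae_nonneg : ∀ᵐ x ∂(volume.restrict (Ioc (0:ℝ) a)), 0 ≤ g₁ x - t := by
      filter_upwards [ae_restrict_mem measurableSet_Ioc, hae_ne] with x hx hxa
      have hxo : x ∈ Ioo (0:ℝ) a := ⟨hx.1, lt_of_le_of_ne hx.2 hxa⟩
      have := (hsub1 hxo).2
      linarith
    have hconst_int : ∫ x in Ioc (0:ℝ) a, t ∂volume = a * t := by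
      rw [setIntegral_const, Real.volume_real_Ioc_of_le ha0, sub_zero,
        smul_eq_mul]
    have key1 : ∫⁻ x in Ioc (0:ℝ) a, ENNReal.ofReal (g₁ x - t)
        = ENNReal.ofReal ((∫ x in Ioc (0:ℝ) a, g₁ x) - a * t) := by
      rw [← ofReal_integral_eq_lintegral_ofReal hint1 hae_nonneg,
        integral_sub (hg₁int.mono_set hIocsub) hconst, hconst_int]
    have key2 : (∫ x in Ioc (0:ℝ) a, g₂ x) - a * t = ∫ x in Ioc (0:ℝ) a, (g₂ x - t) := by
      rw [integral_sub (hg₂int.mono_set hIocsub) hconst, hconst_int]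
    have hmid : (∫ x in Ioc (0:ℝ) a, g₁ x) - a * t ≤ (∫ x in Ioc (0:ℝ) a, g₂ x) - a * t :=
      sub_le_sub_right (hdom a ⟨hapos, ha1⟩) _
    have h3 : ENNReal.ofReal ((∫ x in Ioc (0:ℝ) a, g₂ x) - a * t)
        ≤ ∫⁻ x in Ioc (0:ℝ) a, ENNReal.ofReal (g₂ x - t) := by
      rw [key2]
      calc ENNReal.ofReal (∫ x in Ioc (0:ℝ) a, (g₂ x - t))
          ≤ ENNReal.ofReal (∫ x in Ioc (0:ℝ) a, max (g₂ x - t) 0) := by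
            apply ENNReal.ofReal_le_ofReal
            exact integral_mono hint2 hint2.pos_part (fun x => le_max_left _ _)
        _ = ∫⁻ x in Ioc (0:ℝ) a, ENNReal.ofReal (max (g₂ x - t) 0) :=
            ofReal_integral_eq_lintegral_ofReal hint2.pos_part
              (ae_of_all _ fun x => le_max_right _ _)
        _ = ∫⁻ x in Ioc (0:ℝ) a, ENNReal.ofReal (g₂ x - t) := by
            refine lintegral_congr fun x => ?_
            rcases le_total (g₂ x - t) 0 with h | h
            · rw [max_eq_right h, ENNReal.ofReal_eq_zero.2 h, ENNReal.ofReal_zero]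
            · rw [max_eq_left h]
    calc ∫⁻ x in Ioc (0:ℝ) 1, ENNReal.ofReal (g₁ x - t)
        = ENNReal.ofReal ((∫ x in Ioc (0:ℝ) a, g₁ x) - a * t) := by rw [hsplit, key1]
      _ ≤ ENNReal.ofReal ((∫ x in Ioc (0:ℝ) a, g₂ x) - a * t) := ENNReal.ofReal_le_ofReal hmid
      _ ≤ ∫⁻ x in Ioc (0:ℝ) a, ENNReal.ofReal (g₂ x - t) := h3
      _ ≤ ∫⁻ x in Ioc (0:ℝ) 1, ENNReal.ofReal (g₂ x - t) := lintegral_mono_set hIocsub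

lemma expandA (G g k : ℝ → ℝ)
    (hG : ConvexOn ℝ (Ici (0:ℝ)) G) (hG0 : ∀ x : ℝ, 0 ≤ x → 0 ≤ G x)
    (hGmono : MonotoneOn G (Ici (0:ℝ)))
    (hGlc : ∀ x : ℝ, 0 < x → ContinuousWithinAt G (Iic x) x)
    (hk : Measurable k) (hgk : ∀ x ∈ Ioc (0:ℝ) 1, g x = k x)
    (hg0 : ∀ x ∈ Ioc (0:ℝ) 1, 0 ≤ g x) :
    ∫⁻ x in Ioc (0:ℝ) 1, ENNReal.ofReal (G (g x))
      = ENNReal.ofReal (G 0)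
        + ∫⁻ u in Ioi (0:ℝ), ENNReal.ofReal (Dslope G u)
            * volume {x ∈ Ioc (0:ℝ) 1 | u ≤ g x} := by
  have hDmeas : Measurable (fun u => ENNReal.ofReal (Dslope G u)) :=
    ENNReal.measurable_ofReal.comp (Dslope_mono hG hGmono).measurable
  set f : ℝ → ℝ → ℝ≥0∞ :=
    fun x u => (Ioc (0:ℝ) (k x)).indicator (fun u => ENNReal.ofReal (Dslope G u)) u with hf
  have step1 : ∫⁻ x in Ioc (0:ℝ) 1, ENNReal.ofReal (G (g x))
      = ∫⁻ x in Ioc (0:ℝ) 1, (ENNReal.ofReal (G 0) + ∫⁻ u, f x u) := by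
    refine setLIntegral_congr_fun_ae measurableSet_Ioc (ae_of_all _ fun x hx => ?_)
    rw [G_repr hG hG0 hGmono hGlc (hg0 x hx)]
    congr 1
    rw [hf]
    simp only
    rw [lintegral_indicator measurableSet_Ioc, hgk x hx]
  have step2 : ∫⁻ x in Ioc (0:ℝ) 1, (ENNReal.ofReal (G 0) + ∫⁻ u, f x u)
      = ENNReal.ofReal (G 0) + ∫⁻ x in Ioc (0:ℝ) 1, ∫⁻ u, f x u := by
    rw [lintegral_add_left measurable_const, setLIntegral_const, Real.volume_Ioc]
    norm_num
  have hset : MeasurableSet {p : ℝ × ℝ | 0 < p.2 ∧ p.2 ≤ k p.1} := by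
    have h1 : MeasurableSet {p : ℝ × ℝ | 0 < p.2} := measurable_snd measurableSet_Ioi
    have h2 : MeasurableSet {p : ℝ × ℝ | p.2 ≤ k p.1} :=
      measurableSet_le measurable_snd (hk.comp measurable_fst)
    exact h1.inter h2
  have hmf : Measurable (Function.uncurry f) := by
    have huc : Function.uncurry f =
        ({p : ℝ × ℝ | 0 < p.2 ∧ p.2 ≤ k p.1}).indicator
          (fun p => ENNReal.ofReal (Dslope G p.2)) := by
      funext p
      rcases p with ⟨x, u⟩
      simp only [Function.uncurry, hf, indicator_apply, mem_setOf_eq, mem_Ioc]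
    rw [huc]
    exact (hDmeas.comp measurable_snd).indicator hset
  have step3 : ∫⁻ x in Ioc (0:ℝ) 1, ∫⁻ u, f x u
      = ∫⁻ u, ∫⁻ x in Ioc (0:ℝ) 1, f x u := lintegral_lintegral_swap hmf.aemeasurable
  have step4 : ∀ u : ℝ, ∫⁻ x in Ioc (0:ℝ) 1, f x u
      = (Ioi (0:ℝ)).indicator
          (fun u => ENNReal.ofReal (Dslope G u) * volume {x ∈ Ioc (0:ℝ) 1 | u ≤ g x}) u := by
    intro u
    rcases le_or_gt u 0 with hu | hu
    · have hz : ∀ x, f x u = 0 := by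
        intro x
        rw [hf]
        simp only
        rw [indicator_apply, if_neg (fun h : u ∈ Ioc (0:ℝ) (k x) => absurd h.1 (not_lt.2 hu))]
      rw [indicator_of_notMem (by simpa using hu)]
      simp [hz]
    · rw [indicator_of_mem (mem_Ioi.2 hu)]
      have hpt : ∀ x, f x u
          = ENNReal.ofReal (Dslope G u) * ({x | u ≤ k x}).indicator 1 x := by
        intro x
        rw [hf]
        simp only [indicator_apply, mem_Ioc, mem_setOf_eq]
        by_cases h : u ≤ k x
        · rw [if_pos ⟨hu, h⟩, if_pos h, Pi.one_apply, mul_one]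
        · rw [if_neg (fun hh => h hh.2), if_neg h, mul_zero]
      calc ∫⁻ x in Ioc (0:ℝ) 1, f x u
          = ∫⁻ x in Ioc (0:ℝ) 1,
              ENNReal.ofReal (Dslope G u) * ({x | u ≤ k x}).indicator 1 x :=
            lintegral_congr hpt
        _ = ENNReal.ofReal (Dslope G u)
              * ∫⁻ x in Ioc (0:ℝ) 1, ({x | u ≤ k x}).indicator 1 x :=
            lintegral_const_mul _
              (measurable_const.indicator (measurableSet_le measurable_const hk))
        _ = ENNReal.ofReal (Dslope G u) * volume {x ∈ Ioc (0:ℝ) 1 | u ≤ g x} := by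
            rw [lintegral_indicator_one (measurableSet_le measurable_const hk),
              Measure.restrict_apply' measurableSet_Ioc]
            congr 2
            ext x
            simp only [mem_inter_iff, mem_setOf_eq, mem_sep_iff]
            constructor
            · rintro ⟨h1, h2⟩
              exact ⟨h2, by rw [hgk x h2]; exact h1⟩
            · rintro ⟨h1, h2⟩
              exact ⟨by rw [← hgk x h1]; exact h2, h1⟩
  rw [step1, step2, step3]
  congr 1
  rw [lintegral_congr step4, lintegral_indicator measurableSet_Ioi]

lemma weight_mono_compare (D : ℝ → ℝ) (hD : Monotone D)
    (N₁ N₂ : ℝ → ℝ≥0∞) (hN₁ : Measurable N₁) (hN₂ : Measurable N₂)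
    (hC : ∀ t : ℝ, 0 ≤ t → ∫⁻ u in Ioi t, N₁ u ≤ ∫⁻ u in Ioi t, N₂ u) :
    ∫⁻ u in Ioi (0:ℝ), ENNReal.ofReal (D u) * N₁ u
      ≤ ∫⁻ u in Ioi (0:ℝ), ENNReal.ofReal (D u) * N₂ u := by
  have hDmeasSet : ∀ s : ℝ, MeasurableSet {u : ℝ | s < D u} :=
    fun s => measurableSet_lt measurable_const hD.measurable
  have main : ∀ N : ℝ → ℝ≥0∞, Measurable N →
      ∫⁻ u in Ioi (0:ℝ), ENNReal.ofReal (D u) * N u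
        = ∫⁻ s, (Ioi (0:ℝ)).indicator
            (fun s => ∫⁻ u in {u : ℝ | s < D u} ∩ Ioi 0, N u) s := by
    intro N hN
    set f : ℝ → ℝ → ℝ≥0∞ := fun u s => (Ioo (0:ℝ) (D u)).indicator (fun _ => N u) s with hf
    have hset : MeasurableSet {p : ℝ × ℝ | 0 < p.2 ∧ p.2 < D p.1} := by
      have h1 : MeasurableSet {p : ℝ × ℝ | 0 < p.2} := measurable_snd measurableSet_Ioi
      have h2 : MeasurableSet {p : ℝ × ℝ | p.2 < D p.1} :=
        measurableSet_lt measurable_snd (hD.measurable.comp measurable_fst)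
      exact h1.inter h2
    have hmf : Measurable (Function.uncurry f) := by
      have huc : Function.uncurry f =
          ({p : ℝ × ℝ | 0 < p.2 ∧ p.2 < D p.1}).indicator (fun p => N p.1) := by
        funext p
        rcases p with ⟨u, s⟩
        simp only [Function.uncurry, hf, indicator_apply, mem_setOf_eq, mem_Ioo]
      rw [huc]
      exact (hN.comp measurable_fst).indicator hset
    have h1 : ∀ u, ENNReal.ofReal (D u) * N u = ∫⁻ s, f u s := by
      intro u
      rw [hf]
      simp only
      rw [lintegral_indicator measurableSet_Ioo, setLIntegral_const, Real.volume_Ioo,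
        sub_zero, mul_comm]
    have h2 : ∀ s : ℝ, ∫⁻ u in Ioi (0:ℝ), f u s
        = (Ioi (0:ℝ)).indicator (fun s => ∫⁻ u in {u : ℝ | s < D u} ∩ Ioi 0, N u) s := by
      intro s
      rcases le_or_gt s 0 with hs | hs
      · rw [indicator_of_notMem (by simpa using hs)]
        have hz : ∀ u, f u s = 0 := by
          intro u
          rw [hf]
          exact indicator_of_notMem (fun h : s ∈ Ioo (0:ℝ) (D u) =>
            absurd h.1 (not_lt.2 hs)) _
        simp [hz]
      · rw [indicator_of_mem (mem_Ioi.2 hs)]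
        have hpt : ∀ u, f u s = ({u : ℝ | s < D u}).indicator N u := by
          intro u
          rw [hf]
          simp only [indicator_apply, mem_Ioo, mem_setOf_eq]
          by_cases h : s < D u
          · rw [if_pos ⟨hs, h⟩, if_pos h]
          · rw [if_neg (fun hh => h hh.2), if_neg h]
        rw [lintegral_congr hpt, lintegral_indicator (hDmeasSet s),
          Measure.restrict_restrict (hDmeasSet s)]
    calc ∫⁻ u in Ioi (0:ℝ), ENNReal.ofReal (D u) * N u
        = ∫⁻ u in Ioi (0:ℝ), ∫⁻ s, f u s := lintegral_congr h1
      _ = ∫⁻ s, ∫⁻ u in Ioi (0:ℝ), f u s := lintegral_lintegral_swap hmf.aemeasurable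
      _ = ∫⁻ s, (Ioi (0:ℝ)).indicator
            (fun s => ∫⁻ u in {u : ℝ | s < D u} ∩ Ioi 0, N u) s := lintegral_congr h2
  rw [main N₁ hN₁, main N₂ hN₂]
  apply lintegral_mono
  intro s
  rcases le_or_gt s 0 with hs | hs
  · rw [indicator_of_notMem (by simpa using hs), indicator_of_notMem (by simpa using hs)]
  · rw [indicator_of_mem (mem_Ioi.2 hs), indicator_of_mem (mem_Ioi.2 hs)]
    set U := {u : ℝ | s < D u} ∩ Ioi 0 with hU
    rcases eq_empty_or_nonempty U with hUe | hUne
    · rw [hUe]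
      simp
    · have hbdd : BddBelow U := ⟨0, fun u hu => (mem_Ioi.1 hu.2).le⟩
      set t := sInf U with htdef
      have ht0 : 0 ≤ t := le_csInf hUne (fun u hu => (mem_Ioi.1 hu.2).le)
      have hUsub : U ⊆ Ici t := fun u hu => csInf_le hbdd hu
      have hIoisub : Ioi t ⊆ U := by
        intro v hv
        obtain ⟨u, huU, huv⟩ := exists_lt_of_csInf_lt hUne hv
        exact ⟨lt_of_lt_of_le huU.1 (hD huv.le), mem_Ioi.2 (lt_trans (mem_Ioi.1 huU.2) huv)⟩
      have hae : U =ᵐ[volume] Ioi t := by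
        have hdiff1 : U \ Ioi t ⊆ {t} := by
          intro u hu
          have h1 := hUsub hu.1
          have h2 : ¬ t < u := hu.2
          simp only [mem_singleton_iff]
          exact le_antisymm (not_lt.1 h2) h1
        have hnull : volume (U \ Ioi t) = 0 :=
          measure_mono_null hdiff1 (measure_singleton t)
        have hnull2 : volume (Ioi t \ U) = 0 := by
          rw [diff_eq_empty.2 hIoisub]
          exact measure_empty
        exact MeasureTheory.ae_eq_set.2 ⟨hnull, hnull2⟩
      calc ∫⁻ u in U, N₁ u = ∫⁻ u in Ioi t, N₁ u := setLIntegral_congr hae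
        _ ≤ ∫⁻ u in Ioi t, N₂ u := hC t ht0
        _ = ∫⁻ u in U, N₂ u := (setLIntegral_congr hae).symm

lemma g_integrable (φ g : ℝ → ℝ)
    (hφ0 : ∀ x ∈ Ioc (0:ℝ) 1, 0 ≤ φ x)
    (hφint : IntegrableOn φ (Ioc (0:ℝ) 1))
    (hgmono : AntitoneOn g (Ioc (0:ℝ) 1))
    (hg0 : ∀ t ∈ Ioc (0:ℝ) 1, 0 ≤ g t)
    (hequi : ∀ l : ℝ, 0 < l →
      volume {x ∈ Ioc (0:ℝ) 1 | l < φ x} = volume {t ∈ Ioc (0:ℝ) 1 | l < g t}) :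
    IntegrableOn g (Ioc (0:ℝ) 1) := by
  have hkm : Measurable ((Ioc (0:ℝ) 1).indicator g) := indicator_meas g hgmono
  have haem : AEMeasurable g (volume.restrict (Ioc (0:ℝ) 1)) :=
    (hkm.aemeasurable).congr (indicator_ae_eq_restrict measurableSet_Ioc)
  have hg0ae : 0 ≤ᵐ[volume.restrict (Ioc (0:ℝ) 1)] g :=
    (ae_restrict_iff' measurableSet_Ioc).2 (ae_of_all _ hg0)
  have hφ0ae : 0 ≤ᵐ[volume.restrict (Ioc (0:ℝ) 1)] φ :=
    (ae_restrict_iff' measurableSet_Ioc).2 (ae_of_all _ hφ0)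
  have hfin : ∫⁻ x in Ioc (0:ℝ) 1, ENNReal.ofReal (g x) < ⊤ := by
    rw [layercake g haem hg0]
    have heq : ∫⁻ t in Ioi (0:ℝ), volume {x ∈ Ioc (0:ℝ) 1 | t < g x}
        = ∫⁻ t in Ioi (0:ℝ), volume {x ∈ Ioc (0:ℝ) 1 | t < φ x} :=
      setLIntegral_congr_fun_ae measurableSet_Ioi (ae_of_all _ fun t ht => (hequi t ht).symm)
    rw [heq, ← layercake φ hφint.1.aemeasurable hφ0]
    exact (hasFiniteIntegral_iff_ofReal hφ0ae).1 hφint.hasFiniteIntegral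
  exact ⟨haem.aestronglyMeasurable, (hasFiniteIntegral_iff_ofReal hg0ae).2 hfin⟩

lemma stepB (G g₁ g₂ : ℝ → ℝ)
    (hG : ConvexOn ℝ (Ici (0:ℝ)) G) (hG0 : ∀ x : ℝ, 0 ≤ x → 0 ≤ G x)
    (hGmono : MonotoneOn G (Ici (0:ℝ)))
    (hGlc : ∀ x : ℝ, 0 < x → ContinuousWithinAt G (Iic x) x)
    (hg₁mono : AntitoneOn g₁ (Ioc (0:ℝ) 1)) (hg₂mono : AntitoneOn g₂ (Ioc (0:ℝ) 1))
    (hg₁0 : ∀ t ∈ Ioc (0:ℝ) 1, 0 ≤ g₁ t) (hg₂0 : ∀ t ∈ Ioc (0:ℝ) 1, 0 ≤ g₂ t)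
    (hg₁int : IntegrableOn g₁ (Ioc (0:ℝ) 1)) (hg₂int : IntegrableOn g₂ (Ioc (0:ℝ) 1))
    (hdom : ∀ t ∈ Ioc (0:ℝ) 1,
      (∫ y in Ioc (0:ℝ) t, g₁ y) ≤ ∫ y in Ioc (0:ℝ) t, g₂ y) :
    (∫⁻ x in Ioc (0:ℝ) 1, ENNReal.ofReal (G (g₁ x)))
      ≤ ∫⁻ x in Ioc (0:ℝ) 1, ENNReal.ofReal (G (g₂ x)) := by
  set k₁ := (Ioc (0:ℝ) 1).indicator g₁ with hk₁def
  set k₂ := (Ioc (0:ℝ) 1).indicator g₂ with hk₂def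
  have hk₁ : Measurable k₁ := indicator_meas g₁ hg₁mono
  have hk₂ : Measurable k₂ := indicator_meas g₂ hg₂mono
  have hgk₁ : ∀ x ∈ Ioc (0:ℝ) 1, g₁ x = k₁ x := fun x hx => (indicator_of_mem hx _).symm
  have hgk₂ : ∀ x ∈ Ioc (0:ℝ) 1, g₂ x = k₂ x := fun x hx => (indicator_of_mem hx _).symm
  set N₁ : ℝ → ℝ≥0∞ := fun u => volume {x ∈ Ioc (0:ℝ) 1 | u ≤ g₁ x} with hN₁def
  set N₂ : ℝ → ℝ≥0∞ := fun u => volume {x ∈ Ioc (0:ℝ) 1 | u ≤ g₂ x} with hN₂def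
  have hN₁anti : Antitone N₁ := fun u v huv =>
    measure_mono (fun x hx => ⟨hx.1, le_trans huv hx.2⟩)
  have hN₂anti : Antitone N₂ := fun u v huv =>
    measure_mono (fun x hx => ⟨hx.1, le_trans huv hx.2⟩)
  have hN₁m : Measurable N₁ := hN₁anti.measurable
  have hN₂m : Measurable N₂ := hN₂anti.measurable
  have hC : ∀ t : ℝ, 0 ≤ t → ∫⁻ u in Ioi t, N₁ u ≤ ∫⁻ u in Ioi t, N₂ u := by
    intro t ht
    have sets₁ : ∀ u : ℝ, {x ∈ Ioc (0:ℝ) 1 | u ≤ k₁ x} = {x ∈ Ioc (0:ℝ) 1 | u ≤ g₁ x} := by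
      intro u; ext x
      simp only [mem_sep_iff]
      exact and_congr_right fun hx => by rw [hgk₁ x hx]
    have sets₂ : ∀ u : ℝ, {x ∈ Ioc (0:ℝ) 1 | u ≤ k₂ x} = {x ∈ Ioc (0:ℝ) 1 | u ≤ g₂ x} := by
      intro u; ext x
      simp only [mem_sep_iff]
      exact and_congr_right fun hx => by rw [hgk₂ x hx]
    have e₁ : ∫⁻ u in Ioi t, N₁ u = ∫⁻ x in Ioc (0:ℝ) 1, ENNReal.ofReal (k₁ x - t) := by
      rw [← swapT k₁ hk₁ t]
      exact lintegral_congr fun u => by rw [hN₁def]; simp only; rw [sets₁ u]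
    have e₂ : ∫⁻ u in Ioi t, N₂ u = ∫⁻ x in Ioc (0:ℝ) 1, ENNReal.ofReal (k₂ x - t) := by
      rw [← swapT k₂ hk₂ t]
      exact lintegral_congr fun u => by rw [hN₂def]; simp only; rw [sets₂ u]
    have congr₁ : ∫⁻ x in Ioc (0:ℝ) 1, ENNReal.ofReal (k₁ x - t)
        = ∫⁻ x in Ioc (0:ℝ) 1, ENNReal.ofReal (g₁ x - t) :=
      setLIntegral_congr_fun_ae measurableSet_Ioc
        (ae_of_all _ fun x hx => by rw [← hgk₁ x hx])
    have congr₂ : ∫⁻ x in Ioc (0:ℝ) 1, ENNReal.ofReal (k₂ x - t)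
        = ∫⁻ x in Ioc (0:ℝ) 1, ENNReal.ofReal (g₂ x - t) :=
      setLIntegral_congr_fun_ae measurableSet_Ioc
        (ae_of_all _ fun x hx => by rw [← hgk₂ x hx])
    rw [e₁, e₂, congr₁, congr₂]
    exact hinge g₁ g₂ hg₁mono hg₁int hg₂int hdom t ht
  have hA₁ := expandA G g₁ k₁ hG hG0 hGmono hGlc hk₁ hgk₁ hg₁0
  have hA₂ := expandA G g₂ k₂ hG hG0 hGmono hGlc hk₂ hgk₂ hg₂0
  rw [hA₁, hA₂]
  exact add_le_add_right
    (weight_mono_compare (Dslope G) (Dslope_mono hG hGmono) N₁ N₂ hN₁m hN₂m hC) _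

end HLPaux

theorem HLP_majorization
    (φ₁ φ₂ : ℝ → ℝ)
    (hφ₁0 : ∀ x ∈ Ioc (0:ℝ) 1, 0 ≤ φ₁ x) (hφ₂0 : ∀ x ∈ Ioc (0:ℝ) 1, 0 ≤ φ₂ x)
    (hφ₁int : IntegrableOn φ₁ (Ioc (0:ℝ) 1)) (hφ₂int : IntegrableOn φ₂ (Ioc (0:ℝ) 1))
    (hφ₁m : Measurable φ₁) (hφ₂m : Measurable φ₂)
    (g₁ g₂ : ℝ → ℝ)  -- the non-increasing rearrangements φ₁*, φ₂*
    (hg₁mono : AntitoneOn g₁ (Ioc (0:ℝ) 1)) (hg₂mono : AntitoneOn g₂ (Ioc (0:ℝ) 1))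
    (hg₁0 : ∀ t ∈ Ioc (0:ℝ) 1, 0 ≤ g₁ t) (hg₂0 : ∀ t ∈ Ioc (0:ℝ) 1, 0 ≤ g₂ t)
    (hequi₁ : ∀ l : ℝ, 0 < l →
      volume {x ∈ Ioc (0:ℝ) 1 | l < φ₁ x} = volume {t ∈ Ioc (0:ℝ) 1 | l < g₁ t})
    (hequi₂ : ∀ l : ℝ, 0 < l →
      volume {x ∈ Ioc (0:ℝ) 1 | l < φ₂ x} = volume {t ∈ Ioc (0:ℝ) 1 | l < g₂ t})
    (hdom : ∀ t ∈ Ioc (0:ℝ) 1,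
      (∫ y in Ioc (0:ℝ) t, g₁ y) ≤ ∫ y in Ioc (0:ℝ) t, g₂ y) :
    ∀ G : ℝ → ℝ, ConvexOn ℝ (Ici (0:ℝ)) G → (∀ x : ℝ, 0 ≤ x → 0 ≤ G x) →
      MonotoneOn G (Ici (0:ℝ)) →
      (∀ x : ℝ, 0 < x → ContinuousWithinAt G (Iic x) x) →
      (∫⁻ x in Ioc (0:ℝ) 1, ENNReal.ofReal (G (φ₁ x)))
        ≤ ∫⁻ x in Ioc (0:ℝ) 1, ENNReal.ofReal (G (φ₂ x)) := by
  intro G hG hG0 hGmono hGlc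
  have hg₁int := HLPaux.g_integrable φ₁ g₁ hφ₁0 hφ₁int hg₁mono hg₁0 hequi₁
  have hg₂int := HLPaux.g_integrable φ₂ g₂ hφ₂0 hφ₂int hg₂mono hg₂0 hequi₂
  have hGmax : Monotone (fun y : ℝ => G (max y 0)) := fun a b hab =>
    hGmono (mem_Ici.2 (le_max_right a 0)) (mem_Ici.2 (le_max_right b 0))
      (max_le_max hab le_rfl)
  have hGmaxm : Measurable (fun y : ℝ => G (max y 0)) := hGmax.measurable
  have key : ∀ (φ g : ℝ → ℝ), Measurable φ → (∀ x ∈ Ioc (0:ℝ) 1, 0 ≤ φ x) →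
      AntitoneOn g (Ioc (0:ℝ) 1) → (∀ x ∈ Ioc (0:ℝ) 1, 0 ≤ g x) →
      (∀ l : ℝ, 0 < l →
        volume {x ∈ Ioc (0:ℝ) 1 | l < φ x} = volume {t ∈ Ioc (0:ℝ) 1 | l < g t}) →
      ∫⁻ x in Ioc (0:ℝ) 1, ENNReal.ofReal (G (φ x))
        = ∫⁻ x in Ioc (0:ℝ) 1, ENNReal.ofReal (G (g x)) := by
    intro φ g hφm hφ0 hgmono hg0 hequi
    have haem₁ : AEMeasurable (fun x => G (φ x)) (volume.restrict (Ioc (0:ℝ) 1)) := by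
      refine (hGmaxm.comp hφm).aemeasurable.congr ?_
      refine (ae_restrict_iff' measurableSet_Ioc).2 (ae_of_all _ fun x hx => ?_)
      simp only [Function.comp_apply]
      rw [max_eq_left (hφ0 x hx)]
    have haem₂ : AEMeasurable (fun x => G (g x)) (volume.restrict (Ioc (0:ℝ) 1)) := by
      refine ((hGmaxm.comp (HLPaux.indicator_meas g hgmono)).aemeasurable).congr ?_
      refine (ae_restrict_iff' measurableSet_Ioc).2 (ae_of_all _ fun x hx => ?_)
      simp only [Function.comp_apply]
      rw [indicator_of_mem hx, max_eq_left (hg0 x hx)]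
    rw [HLPaux.layercake _ haem₁ (fun x hx => hG0 _ (hφ0 x hx)),
      HLPaux.layercake _ haem₂ (fun x hx => hG0 _ (hg0 x hx))]
    exact setLIntegral_congr_fun_ae measurableSet_Ioi (ae_of_all _ fun m _ =>
      HLPaux.G_level_eq G φ g hGmono hGlc hφ0 hg0 hequi m)
  rw [key φ₁ g₁ hφ₁m hφ₁0 hg₁mono hg₁0 hequi₁, key φ₂ g₂ hφ₂m hφ₂0 hg₂mono hg₂0 hequi₂]
  exact HLPaux.stepB G g₁ g₂ hG hG0 hGmono hGlc hg₁mono hg₂mono hg₁0 hg₂0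
    hg₁int hg₂int hdom
end

section
/- Let c > 1 and let g : (0,1] → ℝ≥0 be non-increasing and integrable with (1/t)∫₀ᵗ g(y) dy ≤ c·g(t) for all t ∈ (0,1]. Set f = ∫₀¹ g and define g₁(t) = (f/c)·t^(-1+1/c). Then ∫₀ᵗ g(y) dy ≤ ∫₀ᵗ g₁(y) dy for all t ∈ (0,1]. -/
open MeasureTheory Set Filter Topology

theorem domination_by_extremal_weight (c : ℝ) (hc : 1 < c)
    (g : ℝ → ℝ) (hg0 : ∀ t ∈ Ioc (0:ℝ) 1, 0 ≤ g t)
    (hmono : AntitoneOn g (Ioc (0:ℝ) 1))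
    (hint : IntegrableOn g (Ioc (0:ℝ) 1))
    (hA1 : ∀ t ∈ Ioc (0:ℝ) 1, (1/t) * ∫ y in Ioc (0:ℝ) t, g y ≤ c * g t)
    (f : ℝ) (hf : f = ∫ y in Ioc (0:ℝ) 1, g y)
    (g₁ : ℝ → ℝ) (hg₁ : ∀ t, g₁ t = (f / c) * t ^ (-1 + 1/c)) :
    ∀ t ∈ Ioc (0:ℝ) 1, (∫ y in Ioc (0:ℝ) t, g y) ≤ ∫ y in Ioc (0:ℝ) t, g₁ y := by
  have hc0 : (0:ℝ) < c := lt_trans one_pos hc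
  set Φ : ℝ → ℝ := fun u => ∫ y in Ioc (0:ℝ) u, g y with hΦdef
  have hicc : IntegrableOn g (Icc 0 1) := by
    rwa [integrableOn_Icc_iff_integrableOn_Ioc]
  have hΦcont : ContinuousOn Φ (Icc 0 1) := intervalIntegral.continuousOn_primitive hicc
  have hΦ1 : Φ 1 = f := hf.symm
  have hfnn : 0 ≤ f := by
    rw [hf]; exact setIntegral_nonneg measurableSet_Ioc hg0
  -- additivity of the primitive
  have hadd : ∀ x u : ℝ, 0 < x → x ≤ u → u ≤ 1 → Φ u = Φ x + ∫ y in x..u, g y := by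
    intro x u hx0 hxu hu1
    rw [intervalIntegral.integral_of_le hxu]
    have hset : Ioc (0:ℝ) u = Ioc 0 x ∪ Ioc x u := (Ioc_union_Ioc_eq_Ioc hx0.le hxu).symm
    have h1 : IntegrableOn g (Ioc 0 x) := hint.mono_set (Ioc_subset_Ioc_right (hxu.trans hu1))
    have h2 : IntegrableOn g (Ioc x u) :=
      hint.mono_set (Ioc_subset_Ioc hx0.le hu1)
    simp only [hΦdef]
    rw [hset, setIntegral_union (Ioc_disjoint_Ioc_of_le le_rfl) measurableSet_Ioc h1 h2]
  -- the right limit of g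
  set G : ℝ → ℝ := fun x => sSup (g '' Ioo x 1) with hGdef
  have hGlim : ∀ x ∈ Ioo (0:ℝ) 1, Tendsto g (𝓝[>] x) (𝓝 (G x)) := by
    intro x hx
    refine AntitoneOn.tendsto_nhdsWithin_Ioo_right ?_ ?_ ?_
    · exact ⟨(x+1)/2, by constructor <;> nlinarith [hx.1, hx.2]⟩
    · exact hmono.mono (fun y hy => ⟨hx.1.trans hy.1, hy.2.le⟩)
    · refine ⟨g x, fun v hv => ?_⟩
      obtain ⟨y, hy, rfl⟩ := hv
      exact hmono ⟨hx.1, hx.2.le⟩ ⟨hx.1.trans hy.1, hy.2.le⟩ hy.1.le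
  -- right derivative of Φ
  have hΦderiv : ∀ x ∈ Ioo (0:ℝ) 1, HasDerivWithinAt Φ (G x) (Ici x) x := by
    intro x hx
    have hmeas : StronglyMeasurableAtFilter g (𝓝[>] x) := by
      refine ⟨Ioc x 1, Ioc_mem_nhdsGT_of_mem ⟨le_rfl, hx.2⟩, ?_⟩
      exact hint.aestronglyMeasurable.mono_measure
        (Measure.restrict_mono (Ioc_subset_Ioc_left hx.1.le) le_rfl)
    have h1 : HasDerivWithinAt (fun u => ∫ y in x..u, g y) (G x) (Ici x) x := by
      refine intervalIntegral.integral_hasDerivWithinAt_of_tendsto_ae_right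
        (IntervalIntegrable.refl) hmeas ?_
      exact (hGlim x hx).mono_left inf_le_left
    have h2 : HasDerivWithinAt (fun u => Φ x + ∫ y in x..u, g y) (G x) (Ici x) x :=
      h1.const_add _
    refine h2.congr_of_eventuallyEq ?_ ?_
    · filter_upwards [Icc_mem_nhdsGE_of_mem (⟨le_rfl, hx.2⟩ : x ∈ Ico x 1)] with u hu
      exact hadd x u hx.1 hu.1 hu.2
    · simp
  -- the A1 inequality passes to the right limit
  have hΦle : ∀ x ∈ Ioo (0:ℝ) 1, Φ x ≤ c * x * G x := by
    intro x hx
    have hev : ∀ᶠ y in 𝓝[>] x, Φ y ≤ c * y * g y := by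
      filter_upwards [Ioo_mem_nhdsGT_of_mem (⟨le_rfl, hx.2⟩ : x ∈ Ico x 1)] with y hy
      have hy0 : 0 < y := hx.1.trans hy.1
      have := hA1 y ⟨hy0, hy.2.le⟩
      have := mul_le_mul_of_nonneg_left this hy0.le
      calc Φ y = y * ((1/y) * Φ y) := by field_simp
        _ ≤ y * (c * g y) := this
        _ = c * y * g y := by ring
    have hΦt : Tendsto Φ (𝓝[>] x) (𝓝 (Φ x)) := by
      have hmem : Icc (0:ℝ) 1 ∈ 𝓝[>] x :=
        mem_of_superset (Ioo_mem_nhdsGT_of_mem (⟨le_rfl, hx.2⟩ : x ∈ Ico x 1))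
          (fun y hy => ⟨(hx.1.trans hy.1).le, hy.2.le⟩)
      exact (hΦcont x ⟨hx.1.le, hx.2.le⟩).tendsto.mono_left (nhdsWithin_le_of_mem hmem)
    have hid : Tendsto (fun y : ℝ => y) (𝓝[>] x) (𝓝 x) :=
      tendsto_id.mono_right nhdsWithin_le_nhds
    have hrhs : Tendsto (fun y => c * y * g y) (𝓝[>] x) (𝓝 (c * x * G x)) :=
      (tendsto_const_nhds.mul hid).mul (hGlim x hx)
    exact le_of_tendsto_of_tendsto hΦt hrhs hev
  -- key estimate for exponents c' > c
  have key : ∀ s ∈ Ioc (0:ℝ) 1, ∀ c', c < c' → Φ s ≤ f * s ^ (1/c') := by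
    intro s hs c' hcc'
    have hs0 : (0:ℝ) < s := hs.1
    have hc'0 : (0:ℝ) < c' := hc0.trans hcc'
    have hsp : (0:ℝ) < s ^ (1/c') := Real.rpow_pos_of_pos hs0 _
    rcases le_or_gt (Φ s) 0 with hΦs | hΦs
    · exact hΦs.trans (by positivity)
    set K : ℝ := Φ s / s ^ (1/c') with hKdef
    have hK0 : 0 < K := div_pos hΦs hsp
    set F : ℝ → ℝ := fun x => K * x ^ (1/c') with hFdef
    set F' : ℝ → ℝ := fun x => K * ((1/c') * x ^ (1/c' - 1)) with hF'def
    have main : ∀ ⦃x⦄, x ∈ Icc s 1 → F x ≤ Φ x := by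
      refine image_le_of_deriv_right_lt_deriv_boundary' (f := F) (f' := F') (B := Φ) (B' := G)
        ?_ ?_ ?_ ?_ ?_ ?_
      · refine ContinuousOn.mul continuousOn_const ?_
        intro x hx
        exact (Real.continuousAt_rpow_const x _ (Or.inl (hs0.trans_le hx.1).ne')).continuousWithinAt
      · intro x hx
        have hx0 : (0:ℝ) < x := hs0.trans_le hx.1
        exact ((Real.hasDerivAt_rpow_const (Or.inl hx0.ne')).const_mul K).hasDerivWithinAt
      · have : F s = Φ s := by
          simp only [hFdef, hKdef]
          field_simp
        exact this.le
      · exact hΦcont.mono (fun y hy => ⟨hs0.le.trans hy.1, hy.2⟩)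
      · intro x hx
        exact hΦderiv x ⟨hs0.trans_le hx.1, hx.2⟩
      · intro x hx hcontact
        have hx0 : (0:ℝ) < x := hs0.trans_le hx.1
        have hxIoo : x ∈ Ioo (0:ℝ) 1 := ⟨hx0, hx.2⟩
        have hFx : 0 < F x := mul_pos hK0 (Real.rpow_pos_of_pos hx0 _)
        have hΦx : 0 < Φ x := hcontact ▸ hFx
        have hF'eq : F' x = Φ x / (c' * x) := by
          have hx1 : x ^ (1/c' - 1) = x ^ (1/c') / x := by
            rw [Real.rpow_sub hx0, Real.rpow_one]
          simp only [hF'def, hx1, ← hcontact, hFdef]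
          field_simp
        rw [hF'eq]
        have h1 : Φ x / (c' * x) < Φ x / (c * x) := by
          apply div_lt_div_of_pos_left hΦx (by positivity)
          exact (mul_lt_mul_of_pos_right hcc' hx0)
        refine h1.trans_le ?_
        rw [div_le_iff₀ (by positivity)]
        have := hΦle x hxIoo
        linarith [this]
    have h1 : F 1 ≤ Φ 1 := main ⟨hs.2, le_rfl⟩
    have hF1 : F 1 = K := by
      simp [hFdef, Real.one_rpow]
    rw [hF1, hΦ1, hKdef, div_le_iff₀ hsp] at h1
    linarith [h1]
  -- pass to the limit c' → c
  have key2 : ∀ s ∈ Ioc (0:ℝ) 1, Φ s ≤ f * s ^ (1/c) := by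
    intro s hs
    have hs0 : (0:ℝ) < s := hs.1
    have hcont : ContinuousAt (fun d : ℝ => f * s ^ (1/d)) c := by
      refine ContinuousAt.mul continuousAt_const ?_
      exact (Real.continuousAt_const_rpow hs0.ne').comp
        (continuousAt_const.div continuousAt_id hc0.ne')
    have htt : Tendsto (fun d : ℝ => f * s ^ (1/d)) (𝓝[>] c) (𝓝 (f * s ^ (1/c))) :=
      hcont.tendsto.mono_left nhdsWithin_le_nhds
    refine ge_of_tendsto htt ?_
    filter_upwards [self_mem_nhdsWithin] with d hd
    exact key s hs d hd
  -- compute the integral of g₁ and finish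
  intro t ht
  have hrhs : (∫ y in Ioc (0:ℝ) t, g₁ y) = f * t ^ (1/c) := by
    have h1c : (0:ℝ) < 1/c := by positivity
    calc (∫ y in Ioc (0:ℝ) t, g₁ y)
        = ∫ y in Ioc (0:ℝ) t, (f/c) * y ^ (-1 + 1/c) := by
          simp only [hg₁]
      _ = ∫ y in (0:ℝ)..t, (f/c) * y ^ (-1 + 1/c) := by
          rw [intervalIntegral.integral_of_le ht.1.le]
      _ = (f/c) * ∫ y in (0:ℝ)..t, y ^ (-1 + 1/c) := by
          rw [intervalIntegral.integral_const_mul]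
      _ = (f/c) * ((t ^ (-1 + 1/c + 1) - (0:ℝ) ^ (-1 + 1/c + 1)) / (-1 + 1/c + 1)) := by
          rw [integral_rpow (Or.inl (by linarith))]
      _ = f * t ^ (1/c) := by
          have he : -1 + 1/c + 1 = 1/c := by ring
          rw [he, Real.zero_rpow h1c.ne']
          field_simp
          ring
  rw [hrhs]
  exact key2 t ht
end
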